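/- arXiv:math/9502203 — 5 statements merged into one kernel-verified Lean document; each statement's English description precedes it below -/
import Mathlib

section
/- The forcing R is σ-closed: for every sequence ⟨r_n : n ∈ ℕ⟩ of conditions in R with r_{n+1} ≤_R r_n for all n, there exists a condition r ∈ R with r ≤_R r_n for all n; indeed the coordinatewise union r = ((⋃_n A_{r_n}, ⋃_n <_{r_n}), ⋃_n B_{r_n}, ⋃_n C_{r_n}, ⋃_n F_{r_n}) is such a condition. -/
open Cardinal Set

noncomputable section

/-- A partial function from ordinals to ordinals, represented by its graph. -/
abbrev ColFun := Set (Ordinal × Ordinal)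

/-- `q ∈ Col(X)`: `q` is (the graph of) a function whose domain is an ordinal `< ω₁`
and whose range is a subset of `X`. -/
def IsColFun (X : Set Ordinal) (q : ColFun) : Prop :=
  (∀ a b b', (a, b) ∈ q → (a, b') ∈ q → b = b') ∧
  (∃ δ : Ordinal, δ < (aleph 1).ord ∧ ∀ a : Ordinal, (∃ b, (a, b) ∈ q) ↔ a < δ) ∧
  (∀ a b, (a, b) ∈ q → b ∈ X)

/-- A quadruple `((A, <), B, C, F)`; `F` is a partial function represented by its graph. -/
structure Quad where
  A : Set Ordinal
  lt : Ordinal → Ordinal → Prop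
  B : Set (Ordinal × ColFun)
  C : Set (ℕ → Ordinal)
  F : Set ((ℕ → Ordinal) × (Ordinal × ColFun) × ℕ)

namespace Quad

/-- `x ≤ᵣ y`. -/
def leR (r : Quad) (x y : Ordinal) : Prop := r.lt x y ∨ x = y

/-- `x ⊥ᵣ y`: no `z ∈ Aᵣ` with `z ≤ᵣ x` and `z ≤ᵣ y`. -/
def Incomp (r : Quad) (x y : Ordinal) : Prop := ¬ ∃ z ∈ r.A, r.leR z x ∧ r.leR z y

/-- `r` is a forcing condition. -/
def IsCond (r : Quad) : Prop :=
  -- (1) A is a countable set of ordinals < ω₂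
  r.A.Countable ∧
  (∀ a ∈ r.A, a < (aleph 2).ord) ∧
  -- (2) <ᵣ is a strict partial order on A
  (∀ a b, r.lt a b → a ∈ r.A ∧ b ∈ r.A) ∧
  (∀ a b c, r.lt a b → r.lt b c → r.lt a c) ∧
  -- (3) b <ᵣ a implies a < b (whence <ᵣ is irreflexive and asymmetric)
  (∀ a b, r.lt b a → a < b) ∧
  -- (4) B is a countable subset of A × Col(A) with p ∈ range q for (p,q) ∈ B
  r.B.Countable ∧
  (∀ pq ∈ r.B, pq.1 ∈ r.A ∧ IsColFun r.A pq.2 ∧ ∃ α, (α, pq.1) ∈ pq.2) ∧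
  -- (5) C is a countable set of <ᵣ-descending sequences in A without lower bound
  r.C.Countable ∧
  (∀ a ∈ r.C, (∀ n, a n ∈ r.A) ∧ (∀ n, r.lt (a (n + 1)) (a n)) ∧
    ¬ ∃ z ∈ r.A, ∀ n, r.leR z (a n)) ∧
  -- (6) F is a (partial) function whose domain consists exactly of the pairs
  -- (⟨aₙ⟩, (p,q)) with ⟨aₙ⟩ ∈ C, (p,q) ∈ B, p ≥ a₀, satisfying (*)
  (∀ x ∈ r.F, x.1 ∈ r.C ∧ x.2.1 ∈ r.B ∧ x.1 0 ≤ x.2.1.1) ∧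
  (∀ a pq, a ∈ r.C → pq ∈ r.B → a 0 ≤ pq.1 → ∃! m : ℕ, (a, pq, m) ∈ r.F) ∧
  (∀ a pq m, (a, pq, m) ∈ r.F →
    ∀ p'q' ∈ r.B, r.leR p'q'.1 pq.1 → pq.2 ⊆ p'q'.2 →
      r.lt p'q'.1 (a m) → ∃ k, r.Incomp p'q'.1 (a k))

/-- `Ext r s`: `r ≤_R s`, i.e. `r` is stronger than `s`. -/
def Ext (r s : Quad) : Prop :=
  s.A ⊆ r.A ∧
  (∀ a ∈ s.A, ∀ b ∈ s.A, (r.lt a b ↔ s.lt a b)) ∧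
  (∀ a ∈ s.A, ∀ b ∈ s.A, (r.Incomp a b ↔ s.Incomp a b)) ∧
  s.B ⊆ r.B ∧ s.C ⊆ r.C ∧ s.F ⊆ r.F

end Quad

/-! Every clause in the definition of a condition mentions only finitely many pieces of data.
For the union of a `≤_R`-chain these all lie in a single member of the chain, where the clause
holds; and since `≤_R` preserves `<` and `⊥` on the smaller ground set, the union computes `<`
and `⊥` between such points exactly as that member does. -/

theorem IsColFun.mono {X Y : Set Ordinal} {q : ColFun} (hXY : X ⊆ Y) (h : IsColFun X q) :
    IsColFun Y q :=
  ⟨h.1, h.2.1, fun a b hab => hXY (h.2.2 a b hab)⟩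

namespace Quad

section Ext

variable {r s t : Quad}

theorem Ext.A_subset (h : Ext r s) : s.A ⊆ r.A := h.1

theorem Ext.lt_iff (h : Ext r s) {a b : Ordinal} (ha : a ∈ s.A) (hb : b ∈ s.A) :
    r.lt a b ↔ s.lt a b :=
  h.2.1 a ha b hb

theorem Ext.incomp_iff (h : Ext r s) {a b : Ordinal} (ha : a ∈ s.A) (hb : b ∈ s.A) :
    r.Incomp a b ↔ s.Incomp a b :=
  h.2.2.1 a ha b hb

theorem Ext.B_subset (h : Ext r s) : s.B ⊆ r.B := h.2.2.2.1

theorem Ext.C_subset (h : Ext r s) : s.C ⊆ r.C := h.2.2.2.2.1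

theorem Ext.F_subset (h : Ext r s) : s.F ⊆ r.F := h.2.2.2.2.2

theorem Ext.refl (r : Quad) : Ext r r :=
  ⟨subset_rfl, fun _ _ _ _ => Iff.rfl, fun _ _ _ _ => Iff.rfl, subset_rfl, subset_rfl, subset_rfl⟩

theorem Ext.trans (hrs : Ext r s) (hst : Ext s t) : Ext r t :=
  ⟨hst.A_subset.trans hrs.A_subset,
    fun _ ha _ hb => (hrs.lt_iff (hst.A_subset ha) (hst.A_subset hb)).trans (hst.lt_iff ha hb),
    fun _ ha _ hb =>
      (hrs.incomp_iff (hst.A_subset ha) (hst.A_subset hb)).trans (hst.incomp_iff ha hb),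
    hst.B_subset.trans hrs.B_subset, hst.C_subset.trans hrs.C_subset,
    hst.F_subset.trans hrs.F_subset⟩

end Ext

section IsCond

variable {r : Quad}

theorem IsCond.countable_A (h : r.IsCond) : r.A.Countable := h.1

theorem IsCond.lt_omega_two (h : r.IsCond) {a : Ordinal} (ha : a ∈ r.A) : a < (aleph 2).ord :=
  h.2.1 a ha

theorem IsCond.mem_of_lt (h : r.IsCond) {a b : Ordinal} (hab : r.lt a b) : a ∈ r.A ∧ b ∈ r.A :=
  h.2.2.1 a b hab

theorem IsCond.lt_trans (h : r.IsCond) {a b c : Ordinal} (hab : r.lt a b) (hbc : r.lt b c) :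
    r.lt a c :=
  h.2.2.2.1 a b c hab hbc

theorem IsCond.gt_of_lt (h : r.IsCond) {a b : Ordinal} (hab : r.lt a b) : b < a :=
  h.2.2.2.2.1 b a hab

theorem IsCond.countable_B (h : r.IsCond) : r.B.Countable := h.2.2.2.2.2.1

theorem IsCond.mem_B (h : r.IsCond) {pq : Ordinal × ColFun} (hpq : pq ∈ r.B) :
    pq.1 ∈ r.A ∧ IsColFun r.A pq.2 ∧ ∃ α, (α, pq.1) ∈ pq.2 :=
  h.2.2.2.2.2.2.1 pq hpq

theorem IsCond.countable_C (h : r.IsCond) : r.C.Countable := h.2.2.2.2.2.2.2.1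

theorem IsCond.mem_C (h : r.IsCond) {a : ℕ → Ordinal} (ha : a ∈ r.C) :
    (∀ n, a n ∈ r.A) ∧ (∀ n, r.lt (a (n + 1)) (a n)) ∧ ¬ ∃ z ∈ r.A, ∀ n, r.leR z (a n) :=
  h.2.2.2.2.2.2.2.2.1 a ha

theorem IsCond.mem_F (h : r.IsCond) {x : (ℕ → Ordinal) × (Ordinal × ColFun) × ℕ}
    (hx : x ∈ r.F) : x.1 ∈ r.C ∧ x.2.1 ∈ r.B ∧ x.1 0 ≤ x.2.1.1 :=
  h.2.2.2.2.2.2.2.2.2.1 x hx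

theorem IsCond.existsUnique_F (h : r.IsCond) {a : ℕ → Ordinal} {pq : Ordinal × ColFun}
    (ha : a ∈ r.C) (hpq : pq ∈ r.B) (h0 : a 0 ≤ pq.1) : ∃! m : ℕ, (a, pq, m) ∈ r.F :=
  h.2.2.2.2.2.2.2.2.2.2.1 a pq ha hpq h0

theorem IsCond.F_eq (h : r.IsCond) {a : ℕ → Ordinal} {pq : Ordinal × ColFun} {m m' : ℕ}
    (hm : (a, pq, m) ∈ r.F) (hm' : (a, pq, m') ∈ r.F) : m = m' :=
  let ⟨ha, hpq, h0⟩ := h.mem_F hm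
  (h.existsUnique_F ha hpq h0).unique hm hm'

theorem IsCond.exists_incomp (h : r.IsCond) {a : ℕ → Ordinal} {pq p'q' : Ordinal × ColFun}
    {m : ℕ} (hm : (a, pq, m) ∈ r.F) (hp'q' : p'q' ∈ r.B) (hle : r.leR p'q'.1 pq.1)
    (hsub : pq.2 ⊆ p'q'.2) (hlt : r.lt p'q'.1 (a m)) : ∃ k, r.Incomp p'q'.1 (a k) :=
  h.2.2.2.2.2.2.2.2.2.2.2 a pq m hm p'q' hp'q' hle hsub hlt

end IsCond

structure Chain (r : ℕ → Quad) : Prop where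
  isCond : ∀ n, (r n).IsCond
  ext : ∀ ⦃m n⦄, m ≤ n → Ext (r n) (r m)

theorem Chain.of_succ {r : ℕ → Quad} (hcond : ∀ n, (r n).IsCond)
    (hdec : ∀ n, Ext (r (n + 1)) (r n)) : Chain r := by
  refine ⟨hcond, fun m n hmn => ?_⟩
  induction n, hmn using Nat.le_induction with
  | base => exact Ext.refl _
  | succ n _ ih => exact (hdec n).trans ih

def iUnion (r : ℕ → Quad) : Quad where
  A := ⋃ n, (r n).A
  lt x y := ∃ n, (r n).lt x y
  B := ⋃ n, (r n).B
  C := ⋃ n, (r n).C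
  F := ⋃ n, (r n).F

section iUnion

variable {r : ℕ → Quad}

theorem Chain.lt_mono (hr : Chain r) {m n : ℕ} (hmn : m ≤ n) {x y : Ordinal}
    (h : (r m).lt x y) : (r n).lt x y :=
  let ⟨hx, hy⟩ := (hr.isCond m).mem_of_lt h
  ((hr.ext hmn).lt_iff hx hy).2 h

theorem iUnion_lt_iff (hr : Chain r) {n : ℕ} {x y : Ordinal} (hx : x ∈ (r n).A)
    (hy : y ∈ (r n).A) :
    (iUnion r).lt x y ↔ (r n).lt x y := by
  refine ⟨fun ⟨j, hj⟩ => ?_, fun h => ⟨n, h⟩⟩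
  exact ((hr.ext (le_max_right j n)).lt_iff hx hy).1 (hr.lt_mono (le_max_left j n) hj)

theorem iUnion_leR_iff (hr : Chain r) {n : ℕ} {x y : Ordinal} (hx : x ∈ (r n).A)
    (hy : y ∈ (r n).A) :
    (iUnion r).leR x y ↔ (r n).leR x y :=
  or_congr_left (iUnion_lt_iff hr hx hy)

theorem iUnion_incomp_iff (hr : Chain r) {n : ℕ} {x y : Ordinal} (hx : x ∈ (r n).A)
    (hy : y ∈ (r n).A) :
    (iUnion r).Incomp x y ↔ (r n).Incomp x y := by
  refine ⟨fun h ⟨z, hz, hzx, hzy⟩ => h ⟨z, mem_iUnion_of_mem n hz,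
    (iUnion_leR_iff hr hz hx).2 hzx, (iUnion_leR_iff hr hz hy).2 hzy⟩, ?_⟩
  rintro h ⟨z, hz, hzx, hzy⟩
  obtain ⟨j, hzj⟩ := mem_iUnion.1 hz
  have hext := hr.ext (le_max_right j n)
  have hz' := (hr.ext (le_max_left j n)).A_subset hzj
  exact (hext.incomp_iff hx hy).2 h ⟨z, hz',
    (iUnion_leR_iff hr hz' (hext.A_subset hx)).1 hzx,
    (iUnion_leR_iff hr hz' (hext.A_subset hy)).1 hzy⟩

theorem ext_iUnion (hr : Chain r) (n : ℕ) : Ext (iUnion r) (r n) :=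
  ⟨subset_iUnion (fun n => (r n).A) n, fun _ hx _ hy => iUnion_lt_iff hr hx hy,
    fun _ hx _ hy => iUnion_incomp_iff hr hx hy, subset_iUnion (fun n => (r n).B) n,
    subset_iUnion (fun n => (r n).C) n, subset_iUnion (fun n => (r n).F) n⟩

theorem iUnion_no_lower_bound (hr : Chain r) {a : ℕ → Ordinal} {n : ℕ} (ha : a ∈ (r n).C) :
    ¬ ∃ z ∈ (iUnion r).A, ∀ k, (iUnion r).leR z (a k) := by
  rintro ⟨z, hz, hza⟩
  obtain ⟨j, hzj⟩ := mem_iUnion.1 hz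
  have hext := hr.ext (le_max_right j n)
  have hz' := (hr.ext (le_max_left j n)).A_subset hzj
  have ha' := (hr.isCond n).mem_C ha
  exact ((hr.isCond _).mem_C (hext.C_subset ha)).2.2 ⟨z, hz', fun k =>
    (iUnion_leR_iff hr hz' (hext.A_subset (ha'.1 k))).1 (hza k)⟩

theorem iUnion_existsUnique_F (hr : Chain r) {a : ℕ → Ordinal} {pq : Ordinal × ColFun}
    (ha : a ∈ (iUnion r).C) (hpq : pq ∈ (iUnion r).B) (h0 : a 0 ≤ pq.1) :
    ∃! m : ℕ, (a, pq, m) ∈ (iUnion r).F := by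
  obtain ⟨i, hai⟩ := mem_iUnion.1 ha
  obtain ⟨j, hpqj⟩ := mem_iUnion.1 hpq
  obtain ⟨m, hm, -⟩ := (hr.isCond (max i j)).existsUnique_F
    ((hr.ext (le_max_left i j)).C_subset hai) ((hr.ext (le_max_right i j)).B_subset hpqj) h0
  refine ⟨m, mem_iUnion_of_mem _ hm, fun m' hm' => ?_⟩
  obtain ⟨k, hm'k⟩ := mem_iUnion.1 hm'
  exact (hr.isCond (max k (max i j))).F_eq ((hr.ext (le_max_left _ _)).F_subset hm'k)
    ((hr.ext (le_max_right _ _)).F_subset hm)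

theorem iUnion_exists_incomp (hr : Chain r) {a : ℕ → Ordinal} {pq p'q' : Ordinal × ColFun}
    {m : ℕ} (hm : (a, pq, m) ∈ (iUnion r).F) (hp'q' : p'q' ∈ (iUnion r).B)
    (hle : (iUnion r).leR p'q'.1 pq.1) (hsub : pq.2 ⊆ p'q'.2) (hlt : (iUnion r).lt p'q'.1 (a m)) :
    ∃ k, (iUnion r).Incomp p'q'.1 (a k) := by
  obtain ⟨i, hmi⟩ := mem_iUnion.1 hm
  obtain ⟨j, hp'q'j⟩ := mem_iUnion.1 hp'q'
  set n := max i j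
  have hmn := (hr.ext (le_max_left i j)).F_subset hmi
  have hp'q'n := (hr.ext (le_max_right i j)).B_subset hp'q'j
  obtain ⟨haC, hpqB, -⟩ := (hr.isCond n).mem_F hmn
  have hp' := ((hr.isCond n).mem_B hp'q'n).1
  have hp := ((hr.isCond n).mem_B hpqB).1
  have ha := ((hr.isCond n).mem_C haC).1
  obtain ⟨k, hk⟩ := (hr.isCond n).exists_incomp hmn hp'q'n ((iUnion_leR_iff hr hp' hp).1 hle)
    hsub ((iUnion_lt_iff hr hp' (ha m)).1 hlt)
  exact ⟨k, (iUnion_incomp_iff hr hp' (ha k)).2 hk⟩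

theorem isCond_iUnion (hr : Chain r) : (iUnion r).IsCond := by
  refine ⟨countable_iUnion fun n => (hr.isCond n).countable_A, ?_, ?_, ?_, ?_,
    countable_iUnion fun n => (hr.isCond n).countable_B, ?_,
    countable_iUnion fun n => (hr.isCond n).countable_C, ?_, ?_,
    fun _ _ => iUnion_existsUnique_F hr,
    fun _ _ _ hm _ => iUnion_exists_incomp hr hm⟩
  · intro a ha
    obtain ⟨n, hn⟩ := mem_iUnion.1 ha
    exact (hr.isCond n).lt_omega_two hn
  · rintro a b ⟨n, h⟩
    obtain ⟨ha, hb⟩ := (hr.isCond n).mem_of_lt h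
    exact ⟨mem_iUnion_of_mem n ha, mem_iUnion_of_mem n hb⟩
  · rintro a b c ⟨i, hab⟩ ⟨j, hbc⟩
    exact ⟨max i j, (hr.isCond _).lt_trans (hr.lt_mono (le_max_left i j) hab)
      (hr.lt_mono (le_max_right i j) hbc)⟩
  · rintro a b ⟨n, h⟩
    exact (hr.isCond n).gt_of_lt h
  · intro pq hpq
    obtain ⟨n, hn⟩ := mem_iUnion.1 hpq
    obtain ⟨hp, hq, hrange⟩ := (hr.isCond n).mem_B hn
    exact ⟨mem_iUnion_of_mem n hp, hq.mono (subset_iUnion (fun n => (r n).A) n), hrange⟩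
  · intro a ha
    obtain ⟨n, hn⟩ := mem_iUnion.1 ha
    obtain ⟨hmem, hdesc, -⟩ := (hr.isCond n).mem_C hn
    exact ⟨fun k => mem_iUnion_of_mem n (hmem k), fun k => ⟨n, hdesc k⟩,
      iUnion_no_lower_bound hr hn⟩
  · intro x hx
    obtain ⟨n, hn⟩ := mem_iUnion.1 hx
    obtain ⟨ha, hpq, h0⟩ := (hr.isCond n).mem_F hn
    exact ⟨mem_iUnion_of_mem n ha, mem_iUnion_of_mem n hpq, h0⟩

end iUnion

end Quad

open Quad in
/-- The forcing `R` is σ-closed; indeed the coordinatewise union of a descending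
sequence of conditions is a condition stronger than every term of the sequence. -/
theorem stmt0 (r : ℕ → Quad) (hcond : ∀ n, (r n).IsCond)
    (hdec : ∀ n, Ext (r (n + 1)) (r n)) :
    (∃ t : Quad, t.IsCond ∧ ∀ n, Ext t (r n)) ∧
    (Quad.mk (⋃ n, (r n).A) (fun x y => ∃ n, (r n).lt x y)
        (⋃ n, (r n).B) (⋃ n, (r n).C) (⋃ n, (r n).F)).IsCond ∧
    (∀ n, Ext (Quad.mk (⋃ n, (r n).A) (fun x y => ∃ n, (r n).lt x y)
        (⋃ n, (r n).B) (⋃ n, (r n).C) (⋃ n, (r n).F)) (r n)) := by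
  have hr := Chain.of_succ hcond hdec
  have hcond' := isCond_iUnion hr
  have hext := ext_iUnion hr
  exact ⟨⟨iUnion r, hcond', hext⟩, hcond', hext⟩
end
end

section
/- Assume the Continuum Hypothesis. Then R satisfies the ℵ₂-chain condition: for every family W of conditions in R with |W| = ℵ₂ there exist two distinct conditions r, s ∈ W that are compatible in R, i.e., some condition t ∈ R satisfies t ≤_R r and t ≤_R s. -/
open Cardinal Set

noncomputable section

open Quad

namespace CCAux

/-- transport of a `ColFun` along a map of ordinals (acting on values). -/
def mapCol (f : Ordinal → Ordinal) (q : ColFun) : ColFun :=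
  (fun ab => (ab.1, f ab.2)) '' q

lemma mem_mapCol {f : Ordinal → Ordinal} {q : ColFun} {a b : Ordinal} :
    (a, b) ∈ mapCol f q ↔ ∃ b', (a, b') ∈ q ∧ f b' = b := by
  constructor
  · rintro ⟨⟨a', b'⟩, hm, heq⟩
    simp only [Prod.mk.injEq] at heq
    exact ⟨b', heq.1 ▸ hm, heq.2⟩
  · rintro ⟨b', hm, rfl⟩
    exact ⟨(a, b'), hm, rfl⟩

lemma mapCol_id_of {f : Ordinal → Ordinal} {q : ColFun}
    (h : ∀ a b, (a, b) ∈ q → f b = b) : mapCol f q = q := by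
  ext ⟨a, b⟩
  rw [mem_mapCol]
  constructor
  · rintro ⟨b', hm, rfl⟩; rwa [h a b' hm]
  · intro hm; exact ⟨b, hm, h a b hm⟩

lemma mapCol_mapCol {f g : Ordinal → Ordinal} {q : ColFun} :
    mapCol g (mapCol f q) = mapCol (g ∘ f) q := by
  ext ⟨a, b⟩
  simp only [mem_mapCol]
  constructor
  · rintro ⟨b', ⟨b'', hm, rfl⟩, rfl⟩; exact ⟨b'', hm, rfl⟩
  · rintro ⟨b', hm, rfl⟩; exact ⟨f b', ⟨b', hm, rfl⟩, rfl⟩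

/-- The amalgamation lemma. -/
theorem amalg (r s : Quad) (hr : r.IsCond) (hs : s.IsCond)
    (E : Set Ordinal) (hE : r.A ∩ s.A = E)
    (hsepr : ∀ x ∈ r.A, x ∉ E → ∀ c ∈ E, c < x)
    (hseps : ∀ x ∈ s.A, x ∉ E → ∀ c ∈ E, c < x)
    (φ ψ : Ordinal → Ordinal)
    (hφA : ∀ x ∈ r.A, φ x ∈ s.A) (hψA : ∀ y ∈ s.A, ψ y ∈ r.A)
    (hψφ : ∀ x ∈ r.A, ψ (φ x) = x) (hφψ : ∀ y ∈ s.A, φ (ψ y) = y)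
    (hfix : ∀ c ∈ E, φ c = c)
    (hlt : ∀ x ∈ r.A, ∀ y ∈ r.A, (r.lt x y ↔ s.lt (φ x) (φ y)))
    (hB : s.B = (fun pq : Ordinal × ColFun => (φ pq.1, mapCol φ pq.2)) '' r.B)
    (hC : s.C = (fun a : ℕ → Ordinal => φ ∘ a) '' r.C)
    (hF : s.F = (fun x : (ℕ → Ordinal) × (Ordinal × ColFun) × ℕ =>
        (φ ∘ x.1, (φ x.2.1.1, mapCol φ x.2.1.2), x.2.2)) '' r.F) :
    ∃ t : Quad, t.IsCond ∧ Ext t r ∧ Ext t s := by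
  obtain ⟨hr1, hr2, hr3, hr4, hr5, hr6, hr7, hr8, hr9, hr10, hr11, hr12⟩ := hr
  obtain ⟨hs1, hs2, hs3, hs4, hs5, hs6, hs7, hs8, hs9, hs10, hs11, hs12⟩ := hs
  -- basic facts
  have hEr : E ⊆ r.A := by rw [← hE]; exact inter_subset_left
  have hEs : E ⊆ s.A := by rw [← hE]; exact inter_subset_right
  have hmemE : ∀ {x}, x ∈ r.A → x ∈ s.A → x ∈ E := by
    intro x h1 h2; rw [← hE]; exact ⟨h1, h2⟩
  have hfix' : ∀ c ∈ E, ψ c = c := by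
    intro c hc
    have h3 := hψφ c (hEr hc)
    rwa [hfix c hc] at h3
  -- s-version of hlt
  have hlt' : ∀ x ∈ s.A, ∀ y ∈ s.A, (s.lt x y ↔ r.lt (ψ x) (ψ y)) := by
    intro x hx y hy
    have := hlt (ψ x) (hψA x hx) (ψ y) (hψA y hy)
    rw [hφψ x hx, hφψ y hy] at this
    exact this.symm
  have hltE : ∀ c ∈ E, ∀ d ∈ E, (r.lt c d ↔ s.lt c d) := by
    intro c hc d hd
    have := hlt c (hEr hc) d (hEr hd)
    rwa [hfix c hc, hfix d hd] at this
  -- membership transfers for B, C, F (ψ-direction)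
  have hBψ : ∀ pq ∈ s.B, (ψ pq.1, mapCol ψ pq.2) ∈ r.B := by
    intro pq hpq
    rw [hB] at hpq
    obtain ⟨⟨p₀, q₀⟩, h0, heq⟩ := hpq
    have hq₀ : ∀ a b, (a, b) ∈ q₀ → b ∈ r.A := ((hr7 _ h0).2.1).2.2
    have : (ψ pq.1, mapCol ψ pq.2) = (p₀, q₀) := by
      rw [← heq]
      simp only [Prod.mk.injEq]
      constructor
      · exact hψφ p₀ (hr7 _ h0).1
      · rw [mapCol_mapCol]
        exact mapCol_id_of (fun a b hb => hψφ b (hq₀ a b hb))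
    rw [this]; exact h0
  have hCψ : ∀ a ∈ s.C, ψ ∘ a ∈ r.C := by
    intro a ha
    rw [hC] at ha
    obtain ⟨a₀, h0, heq⟩ := ha
    have : ψ ∘ a = a₀ := by
      funext n
      rw [← heq]
      exact hψφ (a₀ n) ((hr9 a₀ h0).1 n)
    rw [this]; exact h0
  -- q-values in E lemma
  have hqE : ∀ {p q p' q'}, (p, q) ∈ r.B → (p', q') ∈ s.B → q ⊆ q' →
      p ∈ E ∧ (∀ a b, (a, b) ∈ q → b ∈ E) := by
    intro p q p' q' hpq hpq' hsub
    have hqr : ∀ a b, (a, b) ∈ q → b ∈ r.A := ((hr7 _ hpq).2.1).2.2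
    have hqs : ∀ a b, (a, b) ∈ q' → b ∈ s.A := ((hs7 _ hpq').2.1).2.2
    have hvals : ∀ a b, (a, b) ∈ q → b ∈ E := by
      intro a b hb
      exact hmemE (hqr a b hb) (hqs a b (hsub hb))
    obtain ⟨α, hα⟩ := (hr7 _ hpq).2.2
    exact ⟨hvals α p hα, hvals⟩
  have hqE' : ∀ {p q p' q'}, (p, q) ∈ s.B → (p', q') ∈ r.B → q ⊆ q' →
      p ∈ E ∧ (∀ a b, (a, b) ∈ q → b ∈ E) := by
    intro p q p' q' hpq hpq' hsub
    have hqs : ∀ a b, (a, b) ∈ q → b ∈ s.A := ((hs7 _ hpq).2.1).2.2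
    have hqr : ∀ a b, (a, b) ∈ q' → b ∈ r.A := ((hr7 _ hpq').2.1).2.2
    have hvals : ∀ a b, (a, b) ∈ q → b ∈ E := by
      intro a b hb
      exact hmemE (hqr a b (hsub hb)) (hqs a b hb)
    obtain ⟨α, hα⟩ := (hs7 _ hpq).2.2
    exact ⟨hvals α p hα, hvals⟩
  -- if all entries in E, pq in r.B iff in s.B
  have hBtoS : ∀ {p q}, (p, q) ∈ r.B → p ∈ E → (∀ a b, (a, b) ∈ q → b ∈ E) →
      (p, q) ∈ s.B := by
    intro p q hpq hp hq
    rw [hB]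
    refine ⟨(p, q), hpq, ?_⟩
    simp only [Prod.mk.injEq]
    exact ⟨hfix p hp, mapCol_id_of (fun a b hb => hfix b (hq a b hb))⟩
  have hBtoR : ∀ {p q}, (p, q) ∈ s.B → p ∈ E → (∀ a b, (a, b) ∈ q → b ∈ E) →
      (p, q) ∈ r.B := by
    intro p q hpq hp hq
    have := hBψ (p, q) hpq
    simp only at this
    rwa [hfix' p hp, mapCol_id_of (fun a b hb => hfix' b (hq a b hb))] at this
  -- ψ-direction transfer for F
  have hFψ : ∀ x ∈ s.F, (ψ ∘ x.1, (ψ x.2.1.1, mapCol ψ x.2.1.2), x.2.2) ∈ r.F := by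
    rintro ⟨a, ⟨p, q⟩, m⟩ hx
    rw [hF] at hx
    obtain ⟨⟨a₀, ⟨p₀, q₀⟩, m₀⟩, h0, heq⟩ := hx
    simp only [Prod.mk.injEq] at heq
    obtain ⟨ha, ⟨hp, hq⟩, hm⟩ := heq
    have hx₀C : a₀ ∈ r.C := (hr10 _ h0).1
    have hx₀B : (p₀, q₀) ∈ r.B := (hr10 _ h0).2.1
    show (ψ ∘ a, (ψ p, mapCol ψ q), m) ∈ r.F
    rw [← ha, ← hp, ← hq, ← hm]
    have e1 : ψ ∘ (φ ∘ a₀) = a₀ := funext fun n => hψφ (a₀ n) ((hr9 _ hx₀C).1 n)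
    have e2 : ψ (φ p₀) = p₀ := hψφ _ (hr7 _ hx₀B).1
    have e3 : mapCol ψ (mapCol φ q₀) = q₀ := by
      rw [mapCol_mapCol]
      exact mapCol_id_of (fun a b hb => hψφ b (((hr7 _ hx₀B).2.1).2.2 a b hb))
    rw [e1, e2, e3]
    exact h0
  -- φ-direction memberships
  have hFφ : ∀ x ∈ r.F, (φ ∘ x.1, (φ x.2.1.1, mapCol φ x.2.1.2), x.2.2) ∈ s.F := by
    intro x hx; rw [hF]; exact ⟨x, hx, rfl⟩
  have hCφ : ∀ a ∈ r.C, φ ∘ a ∈ s.C := by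
    intro a ha; rw [hC]; exact ⟨a, ha, rfl⟩
  -- explicit components of the amalgam
  set tlt : Ordinal → Ordinal → Prop := fun x y => r.lt x y ∨ s.lt x y with htlt
  set tF : Set ((ℕ → Ordinal) × (Ordinal × ColFun) × ℕ) := r.F ∪ s.F ∪
        {x | (x.1 ∈ r.C ∧ x.1 ∉ s.C ∧ x.2.1 ∈ s.B ∧ x.2.1 ∉ r.B ∧ x.1 0 ≤ x.2.1.1 ∧
              x.2.2 = sInf {n | x.1 n ∉ s.A}) ∨
             (x.1 ∈ s.C ∧ x.1 ∉ r.C ∧ x.2.1 ∈ r.B ∧ x.2.1 ∉ s.B ∧ x.1 0 ≤ x.2.1.1 ∧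
              x.2.2 = sInf {n | x.1 n ∉ r.A})} with htF
  -- restriction lemmas
  have L1 : ∀ x ∈ r.A, ∀ y ∈ r.A, (tlt x y ↔ r.lt x y) := by
    intro x hx y hy
    constructor
    · rintro (h | h)
      · exact h
      · exact (hltE x (hmemE hx (hs3 _ _ h).1) y (hmemE hy (hs3 _ _ h).2)).2 h
    · exact Or.inl
  have L1s : ∀ x ∈ s.A, ∀ y ∈ s.A, (tlt x y ↔ s.lt x y) := by
    intro x hx y hy
    constructor
    · rintro (h | h)
      · exact (hltE x (hmemE (hr3 _ _ h).1 hx) y (hmemE (hr3 _ _ h).2 hy)).1 h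
      · exact h
    · exact Or.inr
  have LR1 : ∀ x ∈ r.A, ∀ y ∈ r.A, (tlt x y ∨ x = y) → r.leR x y := by
    rintro x hx y hy (h | rfl)
    · exact Or.inl ((L1 x hx y hy).1 h)
    · exact Or.inr rfl
  have LR1s : ∀ x ∈ s.A, ∀ y ∈ s.A, (tlt x y ∨ x = y) → s.leR x y := by
    rintro x hx y hy (h | rfl)
    · exact Or.inl ((L1s x hx y hy).1 h)
    · exact Or.inr rfl
  -- cross lemmas
  have L3 : ∀ z, z ∉ r.A → ∀ y ∈ r.A, (tlt z y ∨ z = y) → y ∈ E ∧ s.lt z y := by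
    rintro z hz y hy (h | rfl)
    · rcases h with h | h
      · exact absurd (hr3 _ _ h).1 hz
      · exact ⟨hmemE hy (hs3 _ _ h).2, h⟩
    · exact absurd hy hz
  have L3r : ∀ z, z ∉ s.A → ∀ y ∈ s.A, (tlt z y ∨ z = y) → y ∈ E ∧ r.lt z y := by
    rintro z hz y hy (h | rfl)
    · rcases h with h | h
      · exact ⟨hmemE (hr3 _ _ h).2 hy, h⟩
      · exact absurd (hs3 _ _ h).1 hz
    · exact absurd hy hz
  -- leR transfers
  have hleRφ : ∀ x ∈ r.A, ∀ y ∈ r.A, r.leR x y → s.leR (φ x) (φ y) := by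
    rintro x hx y hy (h | rfl)
    · exact Or.inl ((hlt x hx y hy).1 h)
    · exact Or.inr rfl
  have hleRψ : ∀ x ∈ s.A, ∀ y ∈ s.A, s.leR x y → r.leR (ψ x) (ψ y) := by
    rintro x hx y hy (h | rfl)
    · exact Or.inl ((hlt' x hx y hy).1 h)
    · exact Or.inr rfl
  -- L8 : getting below an r-element from the s-side forces it into E
  have L8 : ∀ p' ∈ s.A, ∀ y ∈ r.A, tlt p' y → y ∈ E ∧ s.lt p' y := by
    intro p' hp' y hy h
    rcases h with h | h
    · have hp'E : p' ∈ E := hmemE (hr3 _ _ h).1 hp'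
      have hylt : y < p' := hr5 _ _ h
      have hyE : y ∈ E := by
        by_contra hyE
        exact absurd (hsepr y hy hyE p' hp'E) (lt_asymm hylt)
      exact ⟨hyE, (hltE p' hp'E y hyE).1 h⟩
    · exact ⟨hmemE hy (hs3 _ _ h).2, h⟩
  have L8r : ∀ p' ∈ r.A, ∀ y ∈ s.A, tlt p' y → y ∈ E ∧ r.lt p' y := by
    intro p' hp' y hy h
    rcases h with h | h
    · exact ⟨hmemE (hr3 _ _ h).2 hy, h⟩
    · have hp'E : p' ∈ E := hmemE hp' (hs3 _ _ h).1
      have hylt : y < p' := hs5 _ _ h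
      have hyE : y ∈ E := by
        by_contra hyE
        exact absurd (hseps y hy hyE p' hp'E) (lt_asymm hylt)
      exact ⟨hyE, (hltE p' hp'E y hyE).2 h⟩
  -- L5 : common-lower-bound transfer
  have L5 : ∀ x ∈ s.A, ∀ y ∈ r.A, ∀ z, z ∈ r.A ∪ s.A → (tlt z x ∨ z = x) →
      (tlt z y ∨ z = y) → ∃ w ∈ r.A, r.leR w (ψ x) ∧ r.leR w y := by
    intro x hx y hy z hz hzx hzy
    by_cases hzr : z ∈ r.A
    · refine ⟨z, hzr, ?_, LR1 z hzr y hy hzy⟩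
      rcases hzx with h | rfl
      · rcases h with h | h
        · have hxE : x ∈ E := hmemE (hr3 _ _ h).2 hx
          rw [hfix' x hxE]
          exact Or.inl h
        · have hzE : z ∈ E := hmemE hzr (hs3 _ _ h).1
          have h2 := (hlt' z (hEs hzE) x hx).1 h
          rw [hfix' z hzE] at h2
          exact Or.inl h2
      · have hxE : z ∈ E := hmemE hzr hx
        rw [hfix' z hxE]
        exact Or.inr rfl
    · have hzs : z ∈ s.A := hz.resolve_left hzr
      refine ⟨ψ z, hψA z hzs, ?_, ?_⟩
      · have hsx : s.leR z x := by
          rcases hzx with h | rfl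
          · rcases h with h | h
            · exact absurd (hr3 _ _ h).1 hzr
            · exact Or.inl h
          · exact Or.inr rfl
        exact hleRψ z hzs x hx hsx
      · obtain ⟨hyE, h⟩ := L3 z hzr y hy hzy
        have h2 := hleRψ z hzs y (hEs hyE) (Or.inl h)
        rwa [hfix' y hyE] at h2
  have L5s : ∀ x ∈ r.A, ∀ y ∈ s.A, ∀ z, z ∈ r.A ∪ s.A → (tlt z x ∨ z = x) →
      (tlt z y ∨ z = y) → ∃ w ∈ s.A, s.leR w (φ x) ∧ s.leR w y := by
    intro x hx y hy z hz hzx hzy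
    by_cases hzs : z ∈ s.A
    · refine ⟨z, hzs, ?_, LR1s z hzs y hy hzy⟩
      rcases hzx with h | rfl
      · rcases h with h | h
        · have hzE : z ∈ E := hmemE (hr3 _ _ h).1 hzs
          have h2 := (hlt z (hEr hzE) x hx).1 h
          rw [hfix z hzE] at h2
          exact Or.inl h2
        · have hxE : x ∈ E := hmemE hx (hs3 _ _ h).2
          rw [hfix x hxE]
          exact Or.inl h
      · have hxE : z ∈ E := hmemE hx hzs
        rw [hfix z hxE]
        exact Or.inr rfl
    · have hzr : z ∈ r.A := hz.resolve_right hzs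
      refine ⟨φ z, hφA z hzr, ?_, ?_⟩
      · have hrx : r.leR z x := by
          rcases hzx with h | rfl
          · rcases h with h | h
            · exact Or.inl h
            · exact absurd (hs3 _ _ h).1 hzs
          · exact Or.inr rfl
        exact hleRφ z hzr x hx hrx
      · obtain ⟨hyE, h⟩ := L3r z hzs y hy hzy
        have h2 := hleRφ z hzr y (hEr hyE) (Or.inl h)
        rwa [hfix y hyE] at h2
  -- Incomp preservation
  have L6 : ∀ x ∈ r.A, ∀ y ∈ r.A, (r.Incomp x y ↔
      ¬ ∃ z ∈ r.A ∪ s.A, ((tlt z x ∨ z = x) ∧ (tlt z y ∨ z = y))) := by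
    intro x hx y hy
    constructor
    · rintro h ⟨z, hz, hzx, hzy⟩
      by_cases hzr : z ∈ r.A
      · exact h ⟨z, hzr, LR1 z hzr x hx hzx, LR1 z hzr y hy hzy⟩
      · have hzs : z ∈ s.A := hz.resolve_left hzr
        obtain ⟨hxE, h1⟩ := L3 z hzr x hx hzx
        obtain ⟨hyE, h2⟩ := L3 z hzr y hy hzy
        refine h ⟨ψ z, hψA z hzs, ?_, ?_⟩
        · have h3 := hleRψ z hzs x (hEs hxE) (Or.inl h1); rwa [hfix' x hxE] at h3
        · have h3 := hleRψ z hzs y (hEs hyE) (Or.inl h2); rwa [hfix' y hyE] at h3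
    · rintro h ⟨z, hz, hzx, hzy⟩
      exact h ⟨z, Or.inl hz, hzx.imp Or.inl id, hzy.imp Or.inl id⟩
  have L6s : ∀ x ∈ s.A, ∀ y ∈ s.A, (s.Incomp x y ↔
      ¬ ∃ z ∈ r.A ∪ s.A, ((tlt z x ∨ z = x) ∧ (tlt z y ∨ z = y))) := by
    intro x hx y hy
    constructor
    · rintro h ⟨z, hz, hzx, hzy⟩
      by_cases hzs : z ∈ s.A
      · exact h ⟨z, hzs, LR1s z hzs x hx hzx, LR1s z hzs y hy hzy⟩
      · have hzr : z ∈ r.A := hz.resolve_right hzs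
        obtain ⟨hxE, h1⟩ := L3r z hzs x hx hzx
        obtain ⟨hyE, h2⟩ := L3r z hzs y hy hzy
        refine h ⟨φ z, hφA z hzr, ?_, ?_⟩
        · have h3 := hleRφ z hzr x (hEr hxE) (Or.inl h1); rwa [hfix x hxE] at h3
        · have h3 := hleRφ z hzr y (hEr hyE) (Or.inl h2); rwa [hfix y hyE] at h3
    · rintro h ⟨z, hz, hzx, hzy⟩
      exact h ⟨z, Or.inr hz, hzx.imp Or.inr id, hzy.imp Or.inr id⟩
  -- cross value lemmas
  have hcvS : ∀ a, a ∈ r.C → a ∉ s.C → a (sInf {n | a n ∉ s.A}) ∉ s.A := by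
    intro a haC haS
    have hne : {n | a n ∉ s.A}.Nonempty := by
      by_contra h
      rw [not_nonempty_iff_eq_empty, eq_empty_iff_forall_notMem] at h
      have hall : ∀ n, a n ∈ s.A := fun n => not_not.mp (h n)
      have heq : φ ∘ a = a :=
        funext fun n => hfix _ (hmemE ((hr9 a haC).1 n) (hall n))
      exact haS (heq ▸ hCφ a haC)
    exact Nat.sInf_mem hne
  have hcvR : ∀ a, a ∈ s.C → a ∉ r.C → a (sInf {n | a n ∉ r.A}) ∉ r.A := by
    intro a haC haR
    have hne : {n | a n ∉ r.A}.Nonempty := by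
      by_contra h
      rw [not_nonempty_iff_eq_empty, eq_empty_iff_forall_notMem] at h
      have hall : ∀ n, a n ∈ r.A := fun n => not_not.mp (h n)
      have heq : ψ ∘ a = a :=
        funext fun n => hfix' _ (hmemE (hall n) ((hs9 a haC).1 n))
      exact haR (heq ▸ hCψ a haC)
    exact Nat.sInf_mem hne
  -- uniqueness of F-values
  have hrsF : ∀ a pq m m', (a, pq, m) ∈ r.F → (a, pq, m') ∈ s.F → m = m' := by
    intro a pq m m' h h'
    obtain ⟨haC, hpqB, _⟩ := hr10 _ h
    obtain ⟨haC', hpqB', _⟩ := hs10 _ h'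
    have haE : ∀ n, a n ∈ E := fun n => hmemE ((hr9 a haC).1 n) ((hs9 a haC').1 n)
    have hpE : pq.1 ∈ E := hmemE (hr7 _ hpqB).1 (hs7 _ hpqB').1
    have hqE2 : ∀ x b, (x, b) ∈ pq.2 → b ∈ E := fun x b hb =>
      hmemE (((hr7 _ hpqB).2.1).2.2 x b hb) (((hs7 _ hpqB').2.1).2.2 x b hb)
    have himg := hFφ _ h
    simp only at himg
    rw [show φ ∘ a = a from funext fun n => hfix _ (haE n),
        hfix _ hpE, mapCol_id_of (fun x b hb => hfix b (hqE2 x b hb))] at himg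
    have hpq' : (pq.1, pq.2) = pq := rfl
    rw [hpq'] at himg
    exact (hs11 a pq haC' hpqB' (hs10 _ h').2.2).unique himg h'
  have huniq : ∀ a pq m m', (a, pq, m) ∈ tF → (a, pq, m') ∈ tF → m = m' := by
    intro a pq m m' h h'
    rcases h with (h | h) | h
    · rcases h' with (h' | h') | h'
      · exact (hr11 a pq (hr10 _ h).1 (hr10 _ h).2.1 (hr10 _ h).2.2).unique h h'
      · exact hrsF a pq m m' h h'
      · rcases h' with h' | h'
        · exact absurd (hr10 _ h).2.1 h'.2.2.2.1
        · exact absurd (hr10 _ h).1 h'.2.1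
    · rcases h' with (h' | h') | h'
      · exact (hrsF a pq m' m h' h).symm
      · exact (hs11 a pq (hs10 _ h).1 (hs10 _ h).2.1 (hs10 _ h).2.2).unique h h'
      · rcases h' with h' | h'
        · exact absurd (hs10 _ h).1 h'.2.1
        · exact absurd (hs10 _ h).2.1 h'.2.2.2.1
    · rcases h with h | h
      · rcases h' with (h' | h') | h'
        · exact absurd (hr10 _ h').2.1 h.2.2.2.1
        · exact absurd (hs10 _ h').1 h.2.1
        · rcases h' with h' | h'
          · have e1 : m = sInf {n | a n ∉ s.A} := h.2.2.2.2.2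
            have e2 : m' = sInf {n | a n ∉ s.A} := h'.2.2.2.2.2
            rw [e1, e2]
          · exact absurd h'.1 h.2.1
      · rcases h' with (h' | h') | h'
        · exact absurd (hr10 _ h').1 h.2.1
        · exact absurd (hs10 _ h').2.1 h.2.2.2.1
        · rcases h' with h' | h'
          · exact absurd h.1 h'.2.1
          · have e1 : m = sInf {n | a n ∉ r.A} := h.2.2.2.2.2
            have e2 : m' = sInf {n | a n ∉ r.A} := h'.2.2.2.2.2
            rw [e1, e2]
  -- now build the amalgam
  refine ⟨⟨r.A ∪ s.A, tlt, r.B ∪ s.B, r.C ∪ s.C, tF⟩, ?_, ?_, ?_⟩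
  · -- IsCond
    refine ⟨hr1.union hs1, ?_, ?_, ?_, ?_, hr6.union hs6, ?_, hr8.union hs8, ?_, ?_, ?_, ?_⟩
    · rintro a (h | h)
      · exact hr2 a h
      · exact hs2 a h
    · rintro a b (h | h)
      · exact ⟨Or.inl (hr3 _ _ h).1, Or.inl (hr3 _ _ h).2⟩
      · exact ⟨Or.inr (hs3 _ _ h).1, Or.inr (hs3 _ _ h).2⟩
    · rintro a b c (hab | hab) (hbc | hbc)
      · exact Or.inl (hr4 _ _ _ hab hbc)
      · have hbE : b ∈ E := hmemE (hr3 _ _ hab).2 (hs3 _ _ hbc).1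
        have hcb : c < b := hs5 _ _ hbc
        have hcE : c ∈ E := by
          by_contra hc
          exact absurd (hseps c (hs3 _ _ hbc).2 hc b hbE) (lt_asymm hcb)
        exact Or.inl (hr4 _ _ _ hab ((hltE b hbE c hcE).2 hbc))
      · have hbE : b ∈ E := hmemE (hr3 _ _ hbc).1 (hs3 _ _ hab).2
        have hcb : c < b := hr5 _ _ hbc
        have hcE : c ∈ E := by
          by_contra hc
          exact absurd (hsepr c (hr3 _ _ hbc).2 hc b hbE) (lt_asymm hcb)
        exact Or.inr (hs4 _ _ _ hab ((hltE b hbE c hcE).1 hbc))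
      · exact Or.inr (hs4 _ _ _ hab hbc)
    · rintro a b (h | h)
      · exact hr5 _ _ h
      · exact hs5 _ _ h
    · rintro pq (h | h)
      · obtain ⟨h1, ⟨c1, c2, c3⟩, h3⟩ := hr7 _ h
        exact ⟨Or.inl h1, ⟨c1, c2, fun a b hb => Or.inl (c3 a b hb)⟩, h3⟩
      · obtain ⟨h1, ⟨c1, c2, c3⟩, h3⟩ := hs7 _ h
        exact ⟨Or.inr h1, ⟨c1, c2, fun a b hb => Or.inr (c3 a b hb)⟩, h3⟩
    · rintro a (h | h)
      · refine ⟨fun n => Or.inl ((hr9 a h).1 n), fun n => Or.inl ((hr9 a h).2.1 n), ?_⟩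
        rintro ⟨z, hz, hzall⟩
        by_cases hzr : z ∈ r.A
        · exact (hr9 a h).2.2 ⟨z, hzr, fun n => LR1 z hzr (a n) ((hr9 a h).1 n) (hzall n)⟩
        · have hzs : z ∈ s.A := hz.resolve_left hzr
          refine (hr9 a h).2.2 ⟨ψ z, hψA z hzs, fun n => ?_⟩
          obtain ⟨hE', h2⟩ := L3 z hzr (a n) ((hr9 a h).1 n) (hzall n)
          have h3 := hleRψ z hzs (a n) (hEs hE') (Or.inl h2)
          rwa [hfix' (a n) hE'] at h3
      · refine ⟨fun n => Or.inr ((hs9 a h).1 n), fun n => Or.inr ((hs9 a h).2.1 n), ?_⟩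
        rintro ⟨z, hz, hzall⟩
        by_cases hzs : z ∈ s.A
        · exact (hs9 a h).2.2 ⟨z, hzs, fun n => LR1s z hzs (a n) ((hs9 a h).1 n) (hzall n)⟩
        · have hzr : z ∈ r.A := hz.resolve_right hzs
          refine (hs9 a h).2.2 ⟨φ z, hφA z hzr, fun n => ?_⟩
          obtain ⟨hE', h2⟩ := L3r z hzs (a n) ((hs9 a h).1 n) (hzall n)
          have h3 := hleRφ z hzr (a n) (hEr hE') (Or.inl h2)
          rwa [hfix (a n) hE'] at h3
    · rintro x ((h | h) | h)
      · exact ⟨Or.inl (hr10 _ h).1, Or.inl (hr10 _ h).2.1, (hr10 _ h).2.2⟩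
      · exact ⟨Or.inr (hs10 _ h).1, Or.inr (hs10 _ h).2.1, (hs10 _ h).2.2⟩
      · rcases h with h | h
        · exact ⟨Or.inl h.1, Or.inr h.2.2.1, h.2.2.2.2.1⟩
        · exact ⟨Or.inr h.1, Or.inl h.2.2.1, h.2.2.2.2.1⟩
    · -- existence and uniqueness of F-values
      rintro a pq haC hpqB h0
      have hex : ∃ m : ℕ, (a, pq, m) ∈ tF := by
        rcases haC with haC | haC
        · rcases hpqB with hpqB | hpqB
          · obtain ⟨m, hm, -⟩ := hr11 a pq haC hpqB h0
            exact ⟨m, Or.inl (Or.inl hm)⟩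
          · by_cases haS : a ∈ s.C
            · obtain ⟨m, hm, -⟩ := hs11 a pq haS hpqB h0
              exact ⟨m, Or.inl (Or.inr hm)⟩
            · by_cases hpqR : pq ∈ r.B
              · obtain ⟨m, hm, -⟩ := hr11 a pq haC hpqR h0
                exact ⟨m, Or.inl (Or.inl hm)⟩
              · exact ⟨sInf {n | a n ∉ s.A}, Or.inr (Or.inl ⟨haC, haS, hpqB, hpqR, h0, rfl⟩)⟩
        · rcases hpqB with hpqB | hpqB
          · by_cases haR : a ∈ r.C
            · obtain ⟨m, hm, -⟩ := hr11 a pq haR hpqB h0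
              exact ⟨m, Or.inl (Or.inl hm)⟩
            · by_cases hpqS : pq ∈ s.B
              · obtain ⟨m, hm, -⟩ := hs11 a pq haC hpqS h0
                exact ⟨m, Or.inl (Or.inr hm)⟩
              · exact ⟨sInf {n | a n ∉ r.A}, Or.inr (Or.inr ⟨haC, haR, hpqB, hpqS, h0, rfl⟩)⟩
          · obtain ⟨m, hm, -⟩ := hs11 a pq haC hpqB h0
            exact ⟨m, Or.inl (Or.inr hm)⟩
      obtain ⟨m, hm⟩ := hex
      exact ⟨m, hm, fun m' hm' => huniq a pq m' m hm' hm⟩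
    · -- the (*) condition
      rintro a pq m hmem p'q' hp'q' hle hsub hltm
      obtain ⟨p, q⟩ := pq
      obtain ⟨p', q'⟩ := p'q'
      simp only at hle hsub hltm ⊢
      rcases hmem with (hmem | hmem) | hmem
      · -- (a,(p,q),m) ∈ r.F
        have haC : a ∈ r.C := (hr10 _ hmem).1
        have hpqB : (p, q) ∈ r.B := (hr10 _ hmem).2.1
        have hpA : p ∈ r.A := (hr7 _ hpqB).1
        by_cases hp'r : (p', q') ∈ r.B
        · have hp'A : p' ∈ r.A := (hr7 _ hp'r).1
          have hle' : r.leR p' p := LR1 p' hp'A p hpA hle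
          have hltm' : r.lt p' (a m) := (L1 p' hp'A (a m) ((hr9 a haC).1 m)).1 hltm
          obtain ⟨k, hk⟩ := hr12 a (p, q) m hmem (p', q') hp'r hle' hsub hltm'
          refine ⟨k, ?_⟩
          exact ((L6 p' hp'A (a k) ((hr9 a haC).1 k)).1 hk :)
        · have hp's : (p', q') ∈ s.B := hp'q'.resolve_left hp'r
          obtain ⟨hpE, hqvE⟩ := hqE hpqB hp's hsub
          have himg := hFφ _ hmem
          simp only at himg
          rw [hfix p hpE, mapCol_id_of (fun x b hb => hfix b (hqvE x b hb))] at himg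
          have hp'sA : p' ∈ s.A := (hs7 _ hp's).1
          have hle' : s.leR p' p := LR1s p' hp'sA p (hEs hpE) hle
          obtain ⟨hamE, hltm'⟩ := L8 p' hp'sA (a m) ((hr9 a haC).1 m) hltm
          have hltm'' : s.lt p' ((φ ∘ a) m) := by
            show s.lt p' (φ (a m))
            rwa [hfix (a m) hamE]
          obtain ⟨k, hk⟩ := hs12 (φ ∘ a) (p, q) m himg (p', q') hp's hle' hsub hltm''
          refine ⟨k, ?_⟩
          rintro ⟨z, hz, hzp', hzak⟩
          obtain ⟨w, hw, hw1, hw2⟩ := L5s (a k) ((hr9 a haC).1 k) p' hp'sA z hz hzak hzp'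
          exact hk ⟨w, hw, hw2, hw1⟩
      · -- (a,(p,q),m) ∈ s.F
        have haC : a ∈ s.C := (hs10 _ hmem).1
        have hpqB : (p, q) ∈ s.B := (hs10 _ hmem).2.1
        have hpA : p ∈ s.A := (hs7 _ hpqB).1
        by_cases hp's : (p', q') ∈ s.B
        · have hp'A : p' ∈ s.A := (hs7 _ hp's).1
          have hle' : s.leR p' p := LR1s p' hp'A p hpA hle
          have hltm' : s.lt p' (a m) := (L1s p' hp'A (a m) ((hs9 a haC).1 m)).1 hltm
          obtain ⟨k, hk⟩ := hs12 a (p, q) m hmem (p', q') hp's hle' hsub hltm'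
          refine ⟨k, ?_⟩
          exact ((L6s p' hp'A (a k) ((hs9 a haC).1 k)).1 hk :)
        · have hp'r : (p', q') ∈ r.B := hp'q'.resolve_right hp's
          obtain ⟨hpE, hqvE⟩ := hqE' hpqB hp'r hsub
          have himg := hFψ _ hmem
          simp only at himg
          rw [hfix' p hpE, mapCol_id_of (fun x b hb => hfix' b (hqvE x b hb))] at himg
          have hp'rA : p' ∈ r.A := (hr7 _ hp'r).1
          have hle' : r.leR p' p := LR1 p' hp'rA p (hEr hpE) hle
          obtain ⟨hamE, hltm'⟩ := L8r p' hp'rA (a m) ((hs9 a haC).1 m) hltm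
          have hltm'' : r.lt p' ((ψ ∘ a) m) := by
            show r.lt p' (ψ (a m))
            rwa [hfix' (a m) hamE]
          obtain ⟨k, hk⟩ := hr12 (ψ ∘ a) (p, q) m himg (p', q') hp'r hle' hsub hltm''
          refine ⟨k, ?_⟩
          rintro ⟨z, hz, hzp', hzak⟩
          obtain ⟨w, hw, hw1, hw2⟩ := L5 (a k) ((hs9 a haC).1 k) p' hp'rA z hz hzak hzp'
          exact hk ⟨w, hw, hw2, hw1⟩
      · -- cross cases: vacuous
        rcases hmem with hmem | hmem
        · obtain ⟨haC', haS', hpqB', hpqR', h0', hmdef'⟩ := hmem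
          have haC : a ∈ r.C := haC'
          have haS : a ∉ s.C := haS'
          have hpqB : (p, q) ∈ s.B := hpqB'
          have hpqR : (p, q) ∉ r.B := hpqR'
          have hmdef : m = sInf {n | a n ∉ s.A} := hmdef'
          have hm' : a m ∉ s.A := by rw [hmdef]; exact hcvS a haC haS
          exfalso
          by_cases hp'r : (p', q') ∈ r.B
          · obtain ⟨hpE, hqvE⟩ := hqE' hpqB hp'r hsub
            exact hpqR (hBtoR hpqB hpE hqvE)
          · have hp's : (p', q') ∈ s.B := hp'q'.resolve_left hp'r
            rcases hltm with h | h
            · have hp'E : p' ∈ E := hmemE (hr3 _ _ h).1 (hs7 _ hp's).1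
              have h1 : a m < p' := hr5 _ _ h
              have hamR : a m ∈ r.A := (hr9 a haC).1 m
              have hamE : a m ∉ E := fun hE => hm' (hEs hE)
              exact absurd (hsepr (a m) hamR hamE p' hp'E) (lt_asymm h1)
            · exact hm' (hs3 _ _ h).2
        · obtain ⟨haC', haR', hpqB', hpqS', h0', hmdef'⟩ := hmem
          have haC : a ∈ s.C := haC'
          have haR : a ∉ r.C := haR'
          have hpqB : (p, q) ∈ r.B := hpqB'
          have hpqS : (p, q) ∉ s.B := hpqS'
          have hmdef : m = sInf {n | a n ∉ r.A} := hmdef'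
          have hm' : a m ∉ r.A := by rw [hmdef]; exact hcvR a haC haR
          exfalso
          by_cases hp's : (p', q') ∈ s.B
          · obtain ⟨hpE, hqvE⟩ := hqE hpqB hp's hsub
            exact hpqS (hBtoS hpqB hpE hqvE)
          · have hp'r : (p', q') ∈ r.B := hp'q'.resolve_right hp's
            rcases hltm with h | h
            · exact hm' (hr3 _ _ h).2
            · have hp'E : p' ∈ E := hmemE (hr7 _ hp'r).1 (hs3 _ _ h).1
              have h1 : a m < p' := hs5 _ _ h
              have hamS : a m ∈ s.A := (hs9 a haC).1 m
              have hamE : a m ∉ E := fun hE => hm' (hEr hE)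
              exact absurd (hseps (a m) hamS hamE p' hp'E) (lt_asymm h1)
  · -- Ext t r
    refine ⟨fun x hx => Or.inl hx, ?_, ?_, fun pq h => Or.inl h, fun a h => Or.inl h,
      fun x h => Or.inl (Or.inl h)⟩
    · intro a ha b hb
      exact L1 a ha b hb
    · intro a ha b hb
      exact ((L6 a ha b hb).symm :)
  · -- Ext t s
    refine ⟨fun x hx => Or.inr hx, ?_, ?_, fun pq h => Or.inr h, fun a h => Or.inr h,
      fun x h => Or.inl (Or.inr h)⟩
    · intro a ha b hb
      exact L1s a ha b hb
    · intro a ha b hb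
      exact ((L6s a ha b hb).symm :)


/-! ## Counting infrastructure -/

universe u v

lemma ch_transfer (h : (2 : Cardinal.{u}) ^ aleph0 = aleph 1) :
    (2 : Cardinal.{v}) ^ aleph0 = aleph 1 := by
  have h1 : (2 : Cardinal.{max u v}) ^ aleph0 = aleph 1 := by
    have h2 := congrArg (Cardinal.lift.{max u v}) h
    rwa [Cardinal.lift_power, Cardinal.lift_two, Cardinal.lift_aleph0, Cardinal.lift_aleph,
      Ordinal.lift_one] at h2
  apply Cardinal.lift_inj.{v, u}.mp
  rw [Cardinal.lift_power, Cardinal.lift_two, Cardinal.lift_aleph0, Cardinal.lift_aleph,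
      Ordinal.lift_one]
  exact h1

/-- countable sets inside `Y` can be coded by an `ℕ`-indexed enumeration of `Y`-elements. -/
lemma code_exists {Z : Type u} (Y : Set Z) (S : Set Z) (hS : S.Countable) (hSY : S ⊆ Y) :
    ∃ g : ℕ → Option Y, S = {z | ∃ n, ∃ y : Y, g n = some y ∧ (y : Z) = z} := by
  rcases S.eq_empty_or_nonempty with rfl | hne
  · refine ⟨fun _ => none, ?_⟩
    ext z
    simp
  · obtain ⟨f, rfl⟩ := hS.exists_eq_range hne
    refine ⟨fun n => some ⟨f n, hSY ⟨n, rfl⟩⟩, ?_⟩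
    ext z
    constructor
    · rintro ⟨n, rfl⟩
      exact ⟨n, ⟨f n, hSY ⟨n, rfl⟩⟩, rfl, rfl⟩
    · rintro ⟨n, y, hy, rfl⟩
      exact ⟨n, congrArg Subtype.val (Option.some.inj hy)⟩

lemma countable_of_image {α : Type u} {β : Type v} {f : α → β} {s : Set α}
    (h : (f '' s).Countable) (hi : InjOn f s) : s.Countable := by
  obtain ⟨g, hg⟩ := countable_iff_exists_injOn.mp h
  exact countable_iff_exists_injOn.mpr
    ⟨g ∘ f, fun x hx y hy hxy =>
      hi hx hy (hg (mem_image_of_mem f hx) (mem_image_of_mem f hy) hxy)⟩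

section CountBounds

lemma aleph1_pow_aleph0 (CH1 : (2 : Cardinal.{u}) ^ aleph0 = aleph 1) : (aleph.{u} 1) ^ (aleph0 : Cardinal.{u}) = aleph 1 := by
  rw [← CH1, ← power_mul, aleph0_mul_aleph0]

lemma optArrow_bound (CH1 : (2 : Cardinal.{u}) ^ aleph0 = aleph 1) {Z : Type u} (hZ : #Z ≤ aleph 1) : #(ℕ → Option Z) ≤ aleph.{u} 1 := by
  rw [mk_arrow]
  have h1 : lift.{0, u} #(Option Z) ≤ aleph.{u} 1 := by
    rw [Cardinal.lift_id', mk_option]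
    calc #Z + 1 ≤ aleph 1 + 1 := by exact add_le_add hZ le_rfl
    _ = aleph 1 := add_one_eq (aleph0_le_aleph 1)
  have h2 : (lift.{u, 0} #ℕ) = (aleph0 : Cardinal.{u}) := by
    rw [mk_nat, lift_aleph0]
  rw [h2]
  calc (lift.{0, u} #(Option Z)) ^ (aleph0 : Cardinal.{u}) ≤ (aleph 1) ^ (aleph0 : Cardinal.{u}) :=
        power_le_power_right h1
  _ = aleph 1 := aleph1_pow_aleph0 CH1

lemma prod_bound {A B : Type u} (hA : #A ≤ aleph 1) (hB : #B ≤ aleph 1) :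
    #(A × B) ≤ aleph.{u} 1 := by
  rw [mk_prod, Cardinal.lift_id, Cardinal.lift_id]
  calc #A * #B ≤ aleph 1 * aleph 1 := mul_le_mul' hA hB
  _ = aleph 1 := mul_eq_self (aleph0_le_aleph 1)

lemma set_bound (CH1 : (2 : Cardinal.{u}) ^ aleph0 = aleph 1) {Z : Type u} (hZ : #Z ≤ aleph0) : #(Set Z) ≤ aleph.{u} 1 := by
  rw [mk_set, ← CH1]
  exact power_le_power_left (by norm_num) hZ

end CountBounds

/-- Pigeonhole: a family of size `> ℵ₁` mapped into `≤ ℵ₁` values has a big fiber. -/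
lemma big_fiber {X : Type u} {V : Type v} (S : Set X) (g : X → V)
    (hV : #V ≤ aleph.{v} 1) (hS : ¬ (#S ≤ aleph.{u} 1)) :
    ∃ v : V, ¬ (#↥{x | x ∈ S ∧ g x = v} ≤ aleph.{u} 1) := by
  by_contra hcon
  push_neg at hcon
  apply hS
  rw [← Cardinal.lift_le.{v, u}]
  rw [show Cardinal.lift.{v, u} (aleph.{u} 1) = aleph.{max u v} 1 from by
    rw [lift_aleph, Ordinal.lift_one]]
  have hJ : Function.Injective (fun x : ULift.{v} ↥S =>
      (⟨g x.down.1, ⟨x.down.1, x.down.2, rfl⟩⟩ : Σ w : V, ↥{x | x ∈ S ∧ g x = w})) := by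
    intro x y hxy
    have h2 := congrArg (fun j : (Σ w : V, ↥{x | x ∈ S ∧ g x = w}) => (j.2 : X)) hxy
    exact ULift.down_injective (Subtype.ext h2)
  calc Cardinal.lift.{v} #↥S
      = #(ULift.{v} ↥S) := (mk_uLift _).symm
    _ ≤ #(Σ w : V, ↥{x | x ∈ S ∧ g x = w}) := mk_le_of_injective hJ
    _ = sum (fun w : V => #↥{x | x ∈ S ∧ g x = w}) := mk_sigma _
    _ ≤ sum (fun _ : V => (aleph.{u} 1)) := sum_le_sum _ _ (fun w => hcon w)
    _ = Cardinal.lift.{u} #V * Cardinal.lift.{v} (aleph.{u} 1) := sum_const _ _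
    _ ≤ aleph.{max u v} 1 * aleph.{max u v} 1 := by
        apply mul_le_mul'
        · calc Cardinal.lift.{u} #V ≤ Cardinal.lift.{u} (aleph.{v} 1) := Cardinal.lift_le.mpr hV
          _ = aleph 1 := by rw [lift_aleph, Ordinal.lift_one]
        · rw [lift_aleph, Ordinal.lift_one]
    _ = aleph 1 := mul_eq_self (aleph0_le_aleph 1)

/-- cross-universe product bound -/
lemma prod_bound' {A : Type u} {B : Type v} (hA : #A ≤ aleph.{u} 1) (hB : #B ≤ aleph.{v} 1) :
    #(A × B) ≤ aleph.{max u v} 1 := by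
  rw [mk_prod]
  calc lift.{v} #A * lift.{u} #B ≤ aleph.{max u v} 1 * aleph.{max u v} 1 := by
        apply mul_le_mul'
        · calc lift.{v} #A ≤ lift.{v} (aleph.{u} 1) := Cardinal.lift_le.mpr hA
          _ = aleph 1 := by rw [lift_aleph, Ordinal.lift_one]
        · calc lift.{u} #B ≤ lift.{u} (aleph.{v} 1) := Cardinal.lift_le.mpr hB
          _ = aleph 1 := by rw [lift_aleph, Ordinal.lift_one]
  _ = aleph 1 := mul_eq_self (aleph0_le_aleph 1)

/-- simple coding without ambient bound -/
lemma code_exists' {Z : Type u} (S : Set Z) (hS : S.Countable) :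
    ∃ g : ℕ → Option Z, S = {z | ∃ n, g n = some z} := by
  rcases S.eq_empty_or_nonempty with rfl | hne
  · refine ⟨fun _ => none, ?_⟩
    ext z
    simp
  · obtain ⟨f, rfl⟩ := hS.exists_eq_range hne
    refine ⟨fun n => some (f n), ?_⟩
    ext z
    constructor
    · rintro ⟨n, rfl⟩
      exact ⟨n, rfl⟩
    · rintro ⟨n, hn⟩
      exact ⟨n, Option.some.inj hn⟩

lemma two_of_big {X : Type u} (S : Set X) (hS : ¬ (#S ≤ aleph.{u} 1)) :
    ∃ x ∈ S, ∃ y ∈ S, x ≠ y := by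
  by_contra hcon
  push_neg at hcon
  apply hS
  have h1 : #↥S ≤ 1 := by
    rw [Cardinal.mk_le_one_iff_set_subsingleton]
    exact fun a ha b hb => hcon a ha b hb
  exact h1.trans (one_le_aleph0.trans (aleph0_le_aleph 1))


/-! ## Ordinal infrastructure -/

lemma aleph2_eq_succ : (aleph.{u} 2) = Order.succ (aleph 1) := by
  rw [show (2:Ordinal) = (1:Ordinal)+1 by norm_num, Ordinal.add_one_eq_succ, aleph_succ]

lemma cof_omega2 : ((aleph.{u} 2).ord).cof = aleph 2 := by
  rw [aleph2_eq_succ]; exact (isRegular_succ (aleph0_le_aleph 1)).cof_eq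

lemma cof_omega1 : ((aleph.{u} 1).ord).cof = aleph 1 := isRegular_aleph_one.cof_eq

lemma zero_lt_omega2 : (0:Ordinal.{u}) < (aleph 2).ord := by
  rw [Cardinal.lt_ord, Ordinal.card_zero]
  exact lt_of_lt_of_le aleph0_pos (aleph0_le_aleph 2)

lemma card_le_aleph1_of_lt {β : Ordinal.{u}} (h : β < (aleph 2).ord) : β.card ≤ aleph 1 := by
  rw [Cardinal.lt_ord, aleph2_eq_succ] at h
  exact Order.lt_succ_iff.mp h

lemma lift_aleph1 : Cardinal.lift.{u+1,u} (aleph 1) = aleph.{u+1} 1 := by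
  rw [Cardinal.lift_aleph, Ordinal.lift_one]

lemma mk_Iio_le_aleph1 {β : Ordinal.{u}} (h : β < (aleph 2).ord) :
    #↥(Iio β) ≤ aleph.{u+1} 1 := by
  rw [Ordinal.mk_Iio_ordinal, ← lift_aleph1]
  exact Cardinal.lift_le.mpr (card_le_aleph1_of_lt h)

/-- a subset of `ω₂` of size `≤ ℵ₁` is bounded. -/
lemma bounded_subset (S : Set Ordinal.{u}) (hS : ∀ ξ ∈ S, ξ < (aleph 2).ord)
    (hc : #↥S ≤ aleph.{u+1} 1) : ∃ b < (aleph 2).ord, ∀ ξ ∈ S, ξ < b := by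
  classical
  have hmk : #↥(Iio ((aleph 1).ord : Ordinal.{u})) = aleph.{u+1} 1 := by
    rw [Ordinal.mk_Iio_ordinal, Cardinal.card_ord, lift_aleph1]
  rw [← hmk, Cardinal.le_def] at hc
  obtain ⟨j⟩ := hc
  have hcard : ((aleph.{u} 1).ord).card < ((aleph.{u} 2).ord).cof := by
    rw [Cardinal.card_ord, cof_omega2]
    exact aleph_lt_aleph.mpr one_lt_two
  refine ⟨Ordinal.blsub _ (fun ι hι =>
      if h : ∃ x : ↥S, j x = ⟨ι, hι⟩ then (h.choose : Ordinal) else 0), ?_, ?_⟩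
  · apply Ordinal.blsub_lt_ord hcard
    intro ι hι
    split
    · next h => exact hS _ h.choose.2
    · exact zero_lt_omega2
  · intro ξ hξ
    have hcond : ∃ x : ↥S, j x = ⟨(j ⟨ξ, hξ⟩).1, (j ⟨ξ, hξ⟩).2⟩ := ⟨⟨ξ, hξ⟩, rfl⟩
    have he : hcond.choose = (⟨ξ, hξ⟩ : ↥S) := j.injective hcond.choose_spec
    have hval := Ordinal.lt_blsub (fun ι hι =>
      if h : ∃ x : ↥S, j x = ⟨ι, hι⟩ then (h.choose : Ordinal) else 0)
      (j ⟨ξ, hξ⟩).1 (j ⟨ξ, hξ⟩).2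
    rw [dif_pos hcond, he] at hval
    exact hval


/-! ## The pair extraction -/

lemma colfun_countable {X : Set Ordinal} {q : ColFun} (h : IsColFun X q) : q.Countable := by
  obtain ⟨hfun, ⟨δ, hδ, hdom⟩, hval⟩ := h
  have hIio : (Iio δ).Countable := by
    rw [← Set.countable_coe_iff]
    rw [← Cardinal.mk_le_aleph0_iff]
    rw [Ordinal.mk_Iio_ordinal]
    have h1 : δ.card ≤ ℵ₀ := by
      rw [Cardinal.lt_ord] at hδ
      have h2 : aleph 1 = Order.succ (aleph 0) := by
        rw [← aleph_succ]
        norm_num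
      rw [h2, Order.lt_succ_iff, aleph_zero] at hδ
      exact hδ
    calc Cardinal.lift δ.card ≤ Cardinal.lift ℵ₀ := Cardinal.lift_le.mpr h1
    _ = ℵ₀ := lift_aleph0
  apply countable_of_image (f := Prod.fst)
  · apply Set.Countable.mono _ hIio
    rintro a ⟨⟨a', b⟩, hm, rfl⟩
    exact (hdom a').mp ⟨b, hm⟩
  · rintro ⟨a, b⟩ hab ⟨a', b'⟩ hab' heq
    dsimp at heq
    subst heq
    rw [hfun a b b' hab hab']

lemma F_countable {r : Quad} (h : r.IsCond) : r.F.Countable := by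
  obtain ⟨h1, h2, h3, h4, h5, h6, h7, h8, h9, h10, h11, h12⟩ := h
  apply countable_of_image (f := fun x => (x.1, x.2.1))
  · apply Set.Countable.mono _ (h8.prod h6)
    rintro ⟨a, pq⟩ ⟨x, hx, heq⟩
    obtain ⟨hC, hB, -⟩ := h10 x hx
    simp only [Prod.mk.injEq] at heq
    exact ⟨heq.1 ▸ hC, heq.2 ▸ hB⟩
  · rintro ⟨a, pq, m⟩ hm ⟨a', pq', m'⟩ hm' heq
    simp only [Prod.mk.injEq] at heq
    obtain ⟨rfl, rfl⟩ := heq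
    obtain ⟨hC, hB, h0⟩ := h10 _ hm
    have := (h11 a pq hC hB h0).unique hm hm'
    rw [this]

lemma zero_lt_omega1 : (0:Ordinal.{u}) < (aleph 1).ord := by
  rw [Cardinal.lt_ord, Ordinal.card_zero]
  exact lt_of_lt_of_le aleph0_pos (aleph0_le_aleph 1)

lemma omega1_lt_omega2 : ((aleph.{u} 1).ord) < (aleph 2).ord :=
  Cardinal.ord_lt_ord.mpr (aleph_lt_aleph.mpr one_lt_two)

lemma exists_good_pair (CH0 : (2 : Cardinal.{0}) ^ aleph0 = aleph 1)
    (W : Set Quad) (hW : ∀ w ∈ W, w.IsCond)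
    (hcard : #↥W = aleph 2) :
    ∃ r ∈ W, ∃ s ∈ W, r ≠ s ∧ ∃ E : Set Ordinal.{0},
      r.A ∩ s.A = E ∧
      (∀ x ∈ r.A, x ∉ E → ∀ c ∈ E, c < x) ∧
      (∀ x ∈ s.A, x ∉ E → ∀ c ∈ E, c < x) ∧
      ∃ φ ψ : Ordinal → Ordinal,
        (∀ x ∈ r.A, φ x ∈ s.A) ∧ (∀ y ∈ s.A, ψ y ∈ r.A) ∧
        (∀ x ∈ r.A, ψ (φ x) = x) ∧ (∀ y ∈ s.A, φ (ψ y) = y) ∧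
        (∀ c ∈ E, φ c = c) ∧
        (∀ x ∈ r.A, ∀ y ∈ r.A, (r.lt x y ↔ s.lt (φ x) (φ y))) ∧
        s.B = (fun pq : Ordinal × ColFun => (φ pq.1, mapCol φ pq.2)) '' r.B ∧
        s.C = (fun a : ℕ → Ordinal => φ ∘ a) '' r.C ∧
        s.F = (fun x : (ℕ → Ordinal) × (Ordinal × ColFun) × ℕ =>
          (φ ∘ x.1, (φ x.2.1.1, mapCol φ x.2.1.2), x.2.2)) '' r.F := by
  classical
  have CH1 : (2 : Cardinal.{1}) ^ aleph0 = aleph 1 := ch_transfer CH0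
  -- enumeration of W
  have hIio : Cardinal.lift.{1, 1} #↥(Iio ((aleph.{0} 2).ord))
      = aleph.{1} 2 := by
    rw [Ordinal.mk_Iio_ordinal, Cardinal.card_ord, Cardinal.lift_lift, Cardinal.lift_aleph]
    norm_num
  have hWlift : Cardinal.lift.{1, 1} #↥W = aleph.{1} 2 := by
    rw [Cardinal.lift_id, hcard]
  obtain ⟨eqv⟩ : Nonempty (↥(Iio ((aleph.{0} 2).ord)) ≃ ↥W) :=
    Cardinal.lift_mk_eq'.mp (hIio.trans hWlift.symm)
  set w : Ordinal → Quad := fun ξ =>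
    if h : ξ < (aleph 2).ord then (eqv ⟨ξ, h⟩ : Quad) else (eqv ⟨0, zero_lt_omega2⟩ : Quad)
    with hwdef
  have hwW : ∀ ξ, ξ < (aleph 2).ord → w ξ ∈ W := by
    intro ξ h
    rw [hwdef]
    dsimp only
    rw [dif_pos h]
    exact (eqv ⟨ξ, h⟩).2
  have hwinj : ∀ ξ, ξ < (aleph 2).ord → ∀ ξ', ξ' < (aleph 2).ord → w ξ = w ξ' → ξ = ξ' := by
    intro ξ h ξ' h' heq
    rw [hwdef] at heq
    dsimp only at heq
    rw [dif_pos h, dif_pos h'] at heq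
    have := eqv.injective (Subtype.coe_injective heq)
    exact congrArg Subtype.val this
  have hwcond : ∀ ξ, ξ < (aleph 2).ord → (w ξ).IsCond := fun ξ h => hW _ (hwW ξ h)
  -- strict bounds for the A-parts
  have bndEx : ∀ ξ, ξ < (aleph 2).ord → ∃ b < (aleph 2).ord, ∀ x ∈ (w ξ).A, x < b := by
    intro ξ h
    have hAc : ((w ξ).A ∪ {0}).Countable := ((hwcond ξ h).1).union (countable_singleton 0)
    obtain ⟨g, hg⟩ := hAc.exists_eq_range ⟨0, Or.inr rfl⟩
    have hglt : ∀ n, g n + 1 < (aleph 2).ord := by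
      intro n
      have : g n ∈ (w ξ).A ∪ {0} := by rw [hg]; exact ⟨n, rfl⟩
      have hlt : g n < (aleph 2).ord := by
        rcases this with h' | h'
        · exact (hwcond ξ h).2.1 _ h'
        · rw [h']; exact zero_lt_omega2
      rw [Ordinal.add_one_eq_succ]
      exact (Cardinal.isSuccLimit_ord (aleph0_le_aleph 2)).succ_lt hlt
    refine ⟨⨆ n, (g n + 1), ?_, ?_⟩
    · apply Ordinal.iSup_lt_ord_lift _ hglt
      rw [mk_nat, lift_aleph0, cof_omega2, ← aleph_zero]
      exact aleph_lt_aleph.mpr (by norm_num)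
    · intro x hx
      have : x ∈ (w ξ).A ∪ {0} := Or.inl hx
      rw [hg] at this
      obtain ⟨n, hn⟩ := this
      calc x = g n := hn.symm
      _ < g n + 1 := by rw [Ordinal.add_one_eq_succ]; exact Order.lt_succ _
      _ ≤ ⨆ n, (g n + 1) := le_ciSup (Ordinal.bddAbove_range _) n
  set bnd : Ordinal → Ordinal := fun ξ =>
    if h : ξ < (aleph 2).ord then (bndEx ξ h).choose else 0 with hbnddef
  have hbnd1 : ∀ ξ, ξ < (aleph 2).ord → bnd ξ < (aleph 2).ord := by
    intro ξ h; rw [hbnddef]; dsimp only; rw [dif_pos h]; exact (bndEx ξ h).choose_spec.1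
  have hbnd2 : ∀ ξ (h : ξ < (aleph 2).ord), ∀ x ∈ (w ξ).A, x < bnd ξ := by
    intro ξ h; rw [hbnddef]; dsimp only; rw [dif_pos h]; exact (bndEx ξ h).choose_spec.2
  -- the club of closure points
  set Cset : Set Ordinal := {x | x < (aleph 2).ord ∧ ∀ ζ, ζ < x → bnd ζ < x} with hCdef
  have hCunb : ∀ y, y < (aleph 2).ord → ∃ x ∈ Cset, y < x := by
    intro y hy
    set t : ℕ → Ordinal := fun n => Nat.rec (y + 1)
      (fun _ tn => max (tn + 1) (Ordinal.blsub tn (fun ζ _ => bnd ζ))) n with htdef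
    have ht0 : t 0 = y + 1 := rfl
    have htsucc : ∀ n, t (n+1) = max (t n + 1) (Ordinal.blsub (t n) (fun ζ _ => bnd ζ)) :=
      fun n => rfl
    have htlt : ∀ n, t n < (aleph 2).ord := by
      intro n
      induction n with
      | zero =>
        rw [ht0, Ordinal.add_one_eq_succ]
        exact (Cardinal.isSuccLimit_ord (aleph0_le_aleph 2)).succ_lt hy
      | succ n ih =>
        rw [htsucc]
        apply max_lt
        · rw [Ordinal.add_one_eq_succ]
          exact (Cardinal.isSuccLimit_ord (aleph0_le_aleph 2)).succ_lt ih
        · apply Ordinal.blsub_lt_ord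
          · rw [cof_omega2]
            exact lt_of_le_of_lt (card_le_aleph1_of_lt ih) (aleph_lt_aleph.mpr one_lt_two)
          · intro ζ hζ
            exact hbnd1 ζ (hζ.trans ih)
    refine ⟨⨆ n, t n, ⟨?_, ?_⟩, ?_⟩
    · apply Ordinal.iSup_lt_ord_lift _ htlt
      rw [mk_nat, lift_aleph0, cof_omega2, ← aleph_zero]
      exact aleph_lt_aleph.mpr (by norm_num)
    · intro ζ hζ
      obtain ⟨n, hn⟩ := (lt_ciSup_iff (Ordinal.bddAbove_range _)).mp hζ
      have h1 : bnd ζ < Ordinal.blsub (t n) (fun ζ _ => bnd ζ) := Ordinal.lt_blsub _ ζ hn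
      calc bnd ζ < Ordinal.blsub (t n) (fun ζ _ => bnd ζ) := h1
      _ ≤ t (n+1) := by rw [htsucc]; exact le_max_right _ _
      _ ≤ ⨆ n, t n := le_ciSup (Ordinal.bddAbove_range _) (n+1)
    · calc y < y + 1 := by rw [Ordinal.add_one_eq_succ]; exact Order.lt_succ _
      _ = t 0 := ht0.symm
      _ ≤ ⨆ n, t n := le_ciSup (Ordinal.bddAbove_range _) 0
  set nextC : Ordinal → Ordinal := fun y =>
    if h : y < (aleph 2).ord then (hCunb y h).choose else 0 with hnextdef
  have hnext1 : ∀ y, y < (aleph 2).ord → nextC y ∈ Cset := by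
    intro y h; rw [hnextdef]; dsimp only; rw [dif_pos h]; exact (hCunb y h).choose_spec.1
  have hnext2 : ∀ y, y < (aleph 2).ord → y < nextC y := by
    intro y h; rw [hnextdef]; dsimp only; rw [dif_pos h]; exact (hCunb y h).choose_spec.2
  -- weak Fodor
  set N : Ordinal → Set Ordinal := fun β =>
    {ξ | ξ ∈ Cset ∧ ∀ x ∈ (w ξ).A, x < ξ → x < β} with hNdef
  have hbig : ∃ β, β < (aleph 2).ord ∧ ¬ (#↥(N β) ≤ aleph.{1} 1) := by
    by_contra hcon0
    push_neg at hcon0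
    have hNsub : ∀ β, ∀ ξ ∈ N β, ξ < (aleph.{0} 2).ord := fun β ξ hξ => hξ.1.1
    set supN : Ordinal.{0} → Ordinal.{0} := fun β =>
      if h : β < (aleph.{0} 2).ord then
        (bounded_subset (N β) (hNsub β) (hcon0 β h)).choose else 0 with hsupNdef
    have hsupN1 : ∀ β, β < (aleph 2).ord → supN β < (aleph 2).ord := by
      intro β h; rw [hsupNdef]; dsimp only; rw [dif_pos h]
      exact (bounded_subset (N β) (hNsub β) (hcon0 β h)).choose_spec.1
    have hsupN2 : ∀ β (h : β < (aleph 2).ord), ∀ ξ ∈ N β, ξ < supN β := by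
      intro β h; rw [hsupNdef]; dsimp only; rw [dif_pos h]
      exact (bounded_subset (N β) (hNsub β) (hcon0 β h)).choose_spec.2
    set cseq : Ordinal.{0} → Ordinal.{0} := Ordinal.lt_wf.fix
      (fun ι IH => nextC (Ordinal.blsub ι (fun ζ hζ => max (IH ζ hζ) (supN (IH ζ hζ)))))
      with hcseqdef
    have hceq : ∀ ι, cseq ι =
        nextC (Ordinal.blsub ι (fun ζ _ => max (cseq ζ) (supN (cseq ζ)))) := by
      intro ι
      rw [hcseqdef]
      exact WellFounded.fix_eq _ _ _
    have hckey : ∀ ι, ι < (aleph.{0} 1).ord → cseq ι ∈ Cset ∧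
        ∀ ζ, ζ < ι → max (cseq ζ) (supN (cseq ζ)) < cseq ι := by
      intro ι
      induction ι using Ordinal.induction with
      | _ ι IH =>
        intro hι
        have hblt : Ordinal.blsub ι (fun ζ _ => max (cseq ζ) (supN (cseq ζ)))
            < (aleph 2).ord := by
          apply Ordinal.blsub_lt_ord
          · rw [cof_omega2]
            exact lt_of_le_of_lt (card_le_aleph1_of_lt (hι.trans omega1_lt_omega2))
              (aleph_lt_aleph.mpr one_lt_two)
          · intro ζ hζ
            have h1 := (IH ζ hζ) (hζ.trans hι)
            have h2 : cseq ζ < (aleph 2).ord := h1.1.1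
            exact max_lt h2 (hsupN1 _ h2)
        constructor
        · rw [hceq ι]; exact hnext1 _ hblt
        · intro ζ hζ
          have h3 := Ordinal.lt_blsub (fun ζ _ => max (cseq ζ) (supN (cseq ζ))) ζ hζ
          rw [hceq ι]
          exact h3.trans (hnext2 _ hblt)
    set ξs : Ordinal.{0} := Ordinal.bsup (aleph.{0} 1).ord (fun ι _ => cseq ι) with hξsdef
    have hξκ : ξs < (aleph 2).ord := by
      rw [hξsdef]
      apply Ordinal.bsup_lt_ord
      · rw [Cardinal.card_ord, cof_omega2]
        exact aleph_lt_aleph.mpr one_lt_two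
      · intro ι hι
        exact (hckey ι hι).1.1
    have hξC : ξs ∈ Cset := by
      refine ⟨hξκ, ?_⟩
      intro ζ hζ
      rw [hξsdef] at hζ
      obtain ⟨ι, hι, h⟩ := (Ordinal.lt_bsup _).mp hζ
      exact lt_of_lt_of_le ((hckey ι hι).1.2 ζ h)
        (le_of_le_of_eq (Ordinal.le_bsup _ ι hι) hξsdef.symm)
    have hsuff : ∃ ι0, ι0 < (aleph.{0} 1).ord ∧ ξs ∈ N (cseq ι0) := by
      rcases ({x | x ∈ (w ξs).A ∧ x < ξs}).eq_empty_or_nonempty with hT | hT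
      · refine ⟨0, zero_lt_omega1, hξC, ?_⟩
        intro x hx hlt
        exact absurd (by exact ⟨hx, hlt⟩ : x ∈ {x | x ∈ (w ξs).A ∧ x < ξs})
          (by rw [hT]; exact notMem_empty x)
      · have hTc : ({x | x ∈ (w ξs).A ∧ x < ξs}).Countable :=
          Set.Countable.mono (fun x hx => hx.1) ((hwcond ξs hξκ).1)
        obtain ⟨g, hg⟩ := hTc.exists_eq_range hT
        have hsel : ∀ n : ℕ, ∃ ι, ι < (aleph.{0} 1).ord ∧ g n < cseq ι := by
          intro n
          have hgn : g n ∈ {x | x ∈ (w ξs).A ∧ x < ξs} := by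
            rw [hg]; exact mem_range_self n
          have := hgn.2
          rw [hξsdef] at this
          obtain ⟨ι, hι, h⟩ := (Ordinal.lt_bsup _).mp this
          exact ⟨ι, hι, h⟩
        have hι0 : (⨆ n, (hsel n).choose) < (aleph.{0} 1).ord := by
          apply Ordinal.iSup_lt_ord_lift
          · rw [mk_nat, lift_aleph0, cof_omega1, ← aleph_zero]
            exact aleph_lt_aleph.mpr (by norm_num)
          · exact fun n => (hsel n).choose_spec.1
        refine ⟨⨆ n, (hsel n).choose, hι0, hξC, ?_⟩
        intro x hx hlt
        have hxT : x ∈ {x | x ∈ (w ξs).A ∧ x < ξs} := ⟨hx, hlt⟩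
        rw [hg] at hxT
        obtain ⟨n, hn⟩ := hxT
        have h1 : g n < cseq ((hsel n).choose) := (hsel n).choose_spec.2
        have h2 : (hsel n).choose ≤ ⨆ n, (hsel n).choose :=
          le_ciSup (Ordinal.bddAbove_range _) n
        rcases lt_or_eq_of_le h2 with h3 | h3
        · have h4 := (hckey _ hι0).2 _ h3
          calc x = g n := hn.symm
          _ < cseq ((hsel n).choose) := h1
          _ ≤ max (cseq ((hsel n).choose)) (supN (cseq ((hsel n).choose))) := le_max_left _ _
          _ < cseq (⨆ n, (hsel n).choose) := h4
        · rw [← hn, ← h3]; exact h1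
    obtain ⟨ι0, hι0, hmem⟩ := hsuff
    have hsucc : ι0 + 1 < (aleph.{0} 1).ord := by
      rw [Ordinal.add_one_eq_succ]
      exact (Cardinal.isSuccLimit_ord (aleph0_le_aleph 1)).succ_lt hι0
    have h4 := (hckey (ι0+1) hsucc).2 ι0
      (by rw [Ordinal.add_one_eq_succ]; exact Order.lt_succ _)
    have h5 : ξs < supN (cseq ι0) := hsupN2 _ (hckey ι0 hι0).1.1 _ hmem
    have h6 : ξs < cseq (ι0+1) := h5.trans (lt_of_le_of_lt (le_max_right _ _) h4)
    have h7 : cseq (ι0+1) ≤ ξs := by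
      rw [hξsdef]; exact Ordinal.le_bsup _ (ι0+1) hsucc
    exact absurd h7 (not_le.mpr h6)
  obtain ⟨β, hβκ, hbigN⟩ := hbig
  -- stage 1 : common trace
  have htrc : ∀ ξ, ξ < (aleph.{0} 2).ord → ({x | x ∈ (w ξ).A ∧ x < ξ}).Countable :=
    fun ξ h => Set.Countable.mono (fun x hx => hx.1) ((hwcond ξ h).1)
  have htrsub : ∀ ξ, ξ ∈ N β → {x | x ∈ (w ξ).A ∧ x < ξ} ⊆ Iio β :=
    fun ξ hξ x hx => hξ.2 x hx.1 hx.2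
  set g1 : Ordinal.{0} → (ℕ → Option ↥(Iio β)) := fun ξ =>
    if h : ξ ∈ N β then (code_exists (Iio β) _ (htrc ξ h.1.1) (htrsub ξ h)).choose
    else fun _ => none with hg1def
  have hg1 : ∀ ξ, ∀ h : ξ ∈ N β, {x | x ∈ (w ξ).A ∧ x < ξ} =
      {z | ∃ n, ∃ y : ↥(Iio β), g1 ξ n = some y ∧ (y : Ordinal.{0}) = z} := by
    intro ξ h
    rw [hg1def]
    dsimp only
    rw [dif_pos h]
    exact (code_exists (Iio β) _ (htrc ξ h.1.1) (htrsub ξ h)).choose_spec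
  obtain ⟨v1, hK1big⟩ := big_fiber (N β) g1 (optArrow_bound CH1 (mk_Iio_le_aleph1 hβκ)) hbigN
  set K1 : Set Ordinal.{0} := {ξ | ξ ∈ N β ∧ g1 ξ = v1} with hK1def
  obtain ⟨ξ0, hξ0, -, -, -⟩ := two_of_big K1 hK1big
  set E : Set Ordinal.{0} := {x | x ∈ (w ξ0).A ∧ x < ξ0} with hEdef
  have htraceE : ∀ ξ ∈ K1, {x | x ∈ (w ξ).A ∧ x < ξ} = E := by
    intro ξ hξ
    rw [hg1 ξ hξ.1, hξ.2, hEdef, hg1 ξ0 hξ0.1, hξ0.2]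
  have hEc : E.Countable := by rw [hEdef]; exact htrc ξ0 hξ0.1.1.1
  -- the fixed injection on E
  set eE : Ordinal.{0} → ℕ := (countable_iff_exists_injOn.mp hEc).choose with heEdef
  have heEinj : InjOn eE E := (countable_iff_exists_injOn.mp hEc).choose_spec
  -- per-condition coding functions
  have fex : ∀ ξ, ξ < (aleph.{0} 2).ord → ∃ f : Ordinal.{0} → ℕ,
      InjOn f (w ξ).A ∧ ∀ x ∈ E, f x = 2 * eE x := by
    intro ξ h
    obtain ⟨gw, hgw⟩ := countable_iff_exists_injOn.mp ((hwcond ξ h).1)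
    refine ⟨fun x => if x ∈ E then 2 * eE x else 2 * gw x + 1, ?_, ?_⟩
    · intro x hx y hy hxy
      dsimp only at hxy
      by_cases hxE : x ∈ E <;> by_cases hyE : y ∈ E
      · rw [if_pos hxE, if_pos hyE] at hxy
        exact heEinj hxE hyE (by omega)
      · rw [if_pos hxE, if_neg hyE] at hxy; omega
      · rw [if_neg hxE, if_pos hyE] at hxy; omega
      · rw [if_neg hxE, if_neg hyE] at hxy
        exact hgw hx hy (by omega)
    · intro x hxE; dsimp only; rw [if_pos hxE]
  set fC : Ordinal.{0} → Ordinal.{0} → ℕ := fun ξ =>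
    if h : ξ < (aleph.{0} 2).ord then (fex ξ h).choose else fun _ => 0 with hfCdef
  have hfC1 : ∀ ξ, ∀ h : ξ < (aleph 2).ord, InjOn (fC ξ) (w ξ).A := by
    intro ξ h; rw [hfCdef]; dsimp only; rw [dif_pos h]; exact (fex ξ h).choose_spec.1
  have hfC2 : ∀ ξ, ∀ h : ξ < (aleph 2).ord, ∀ x ∈ E, fC ξ x = 2 * eE x := by
    intro ξ h; rw [hfCdef]; dsimp only; rw [dif_pos h]; exact (fex ξ h).choose_spec.2
  -- coding of collapse functions
  set Qamb : Set (Ordinal.{0} × ℕ) := {z | z.1 < (aleph.{0} 1).ord} with hQdef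
  have hQbound : #↥Qamb ≤ aleph.{1} 1 := by
    have hJ : Function.Injective (fun z : ↥Qamb =>
        ((⟨z.1.1, z.2⟩ : ↥(Iio ((aleph.{0} 1).ord))), z.1.2)) := by
      intro z z' h
      simp only [Prod.mk.injEq, Subtype.mk.injEq] at h
      exact Subtype.ext (Prod.ext (congrArg Subtype.val h.1) h.2)
    calc #↥Qamb ≤ #(↥(Iio ((aleph.{0} 1).ord)) × ℕ) := mk_le_of_injective hJ
    _ ≤ aleph 1 := prod_bound'
        (le_of_eq (by rw [Ordinal.mk_Iio_ordinal, Cardinal.card_ord, lift_aleph1]))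
        (by rw [mk_nat]; exact aleph0_le_aleph 1)
  set qE : (Ordinal.{0} → ℕ) → Set (Ordinal.{0} × Ordinal.{0}) → (ℕ → Option ↥Qamb) :=
    fun f q =>
    if h : ((fun ab : Ordinal.{0} × Ordinal.{0} => (ab.1, f ab.2)) '' q).Countable ∧
        ((fun ab : Ordinal.{0} × Ordinal.{0} => (ab.1, f ab.2)) '' q) ⊆ Qamb then
      (code_exists Qamb _ h.1 h.2).choose else fun _ => none with hqEdef
  have hqEspec : ∀ f q,
      (h1 : ((fun ab : Ordinal.{0} × Ordinal.{0} => (ab.1, f ab.2)) '' q).Countable) →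
      (h2 : ((fun ab : Ordinal.{0} × Ordinal.{0} => (ab.1, f ab.2)) '' q) ⊆ Qamb) →
      ((fun ab : Ordinal.{0} × Ordinal.{0} => (ab.1, f ab.2)) '' q) =
        {z | ∃ n, ∃ y : ↥Qamb, qE f q n = some y ∧ (y : Ordinal.{0} × ℕ) = z} := by
    intro f q h1 h2
    rw [hqEdef]
    dsimp only
    rw [dif_pos ⟨h1, h2⟩]
    exact (code_exists Qamb _ h1 h2).choose_spec
  have hqcond : ∀ ξ, ∀ h : ξ < (aleph 2).ord, ∀ pq ∈ (w ξ).B,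
      ((fun ab : Ordinal.{0} × Ordinal.{0} => (ab.1, fC ξ ab.2)) '' pq.2).Countable ∧
      ((fun ab : Ordinal.{0} × Ordinal.{0} => (ab.1, fC ξ ab.2)) '' pq.2) ⊆ Qamb := by
    intro ξ h pq hpq
    have hcf : IsColFun (w ξ).A pq.2 := ((hwcond ξ h).2.2.2.2.2.2.1 _ hpq).2.1
    constructor
    · exact (colfun_countable hcf).image _
    · rintro ⟨a, m⟩ ⟨⟨a', b⟩, hab, heq⟩
      obtain ⟨-, ⟨δ, hδ, hdom⟩, -⟩ := hcf
      simp only [Prod.mk.injEq] at heq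
      have ha' : a' < δ := (hdom a').mp ⟨b, hab⟩
      rw [hQdef]
      exact heq.1 ▸ (ha'.trans hδ)
  -- the invariants
  set DM : Ordinal.{0} → Set ℕ := fun ξ => (fC ξ) '' (w ξ).A with hDMdef
  set LM : Ordinal.{0} → Set (ℕ × ℕ) := fun ξ =>
    {mn | ∃ x ∈ (w ξ).A, ∃ y ∈ (w ξ).A, (w ξ).lt x y ∧ fC ξ x = mn.1 ∧ fC ξ y = mn.2}
    with hLMdef
  set BM : Ordinal.{0} → Set (ℕ × (ℕ → Option ↥Qamb)) := fun ξ =>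
    (fun pq => (fC ξ pq.1, qE (fC ξ) pq.2)) '' (w ξ).B with hBMdef
  set CM : Ordinal.{0} → Set (ℕ → ℕ) := fun ξ => (fun a => (fC ξ) ∘ a) '' (w ξ).C with hCMdef
  set FM : Ordinal.{0} → Set ((ℕ → ℕ) × (ℕ × (ℕ → Option ↥Qamb)) × ℕ) := fun ξ =>
    (fun x => ((fC ξ) ∘ x.1, (fC ξ x.2.1.1, qE (fC ξ) x.2.1.2), x.2.2)) '' (w ξ).F with hFMdef
  have hBMc : ∀ ξ, ξ < (aleph 2).ord → (BM ξ).Countable :=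
    fun ξ h => ((hwcond ξ h).2.2.2.2.2.1).image _
  have hCMc : ∀ ξ, ξ < (aleph 2).ord → (CM ξ).Countable :=
    fun ξ h => ((hwcond ξ h).2.2.2.2.2.2.2.1).image _
  have hFMc : ∀ ξ, ξ < (aleph 2).ord → (FM ξ).Countable :=
    fun ξ h => (F_countable (hwcond ξ h)).image _
  set BE : Ordinal.{0} → (ℕ → Option (ℕ × (ℕ → Option ↥Qamb))) := fun ξ =>
    if h : (BM ξ).Countable then (code_exists' (BM ξ) h).choose else fun _ => none with hBEdef
  have hBE : ∀ ξ, (BM ξ).Countable → BM ξ = {z | ∃ n, BE ξ n = some z} := by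
    intro ξ h; rw [hBEdef]; dsimp only; rw [dif_pos h]; exact (code_exists' (BM ξ) h).choose_spec
  set CE : Ordinal.{0} → (ℕ → Option (ℕ → ℕ)) := fun ξ =>
    if h : (CM ξ).Countable then (code_exists' (CM ξ) h).choose else fun _ => none with hCEdef
  have hCE : ∀ ξ, (CM ξ).Countable → CM ξ = {z | ∃ n, CE ξ n = some z} := by
    intro ξ h; rw [hCEdef]; dsimp only; rw [dif_pos h]; exact (code_exists' (CM ξ) h).choose_spec
  set FE : Ordinal.{0} → (ℕ → Option ((ℕ → ℕ) × (ℕ × (ℕ → Option ↥Qamb)) × ℕ)) := fun ξ =>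
    if h : (FM ξ).Countable then (code_exists' (FM ξ) h).choose else fun _ => none with hFEdef
  have hFE : ∀ ξ, (FM ξ).Countable → FM ξ = {z | ∃ n, FE ξ n = some z} := by
    intro ξ h; rw [hFEdef]; dsimp only; rw [dif_pos h]; exact (code_exists' (FM ξ) h).choose_spec
  -- cardinal bounds
  have hnatle : #ℕ ≤ aleph.{0} 1 := by rw [mk_nat]; exact aleph0_le_aleph 1
  have harrownn : #(ℕ → ℕ) ≤ aleph.{0} 1 := by
    rw [← Cardinal.power_def, mk_nat]
    calc ℵ₀ ^ ℵ₀ ≤ (aleph 1) ^ (ℵ₀ : Cardinal.{0}) :=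
          power_le_power_right (aleph0_le_aleph 1)
    _ = aleph 1 := aleph1_pow_aleph0 CH0
  have hQCb : #(ℕ → Option ↥Qamb) ≤ aleph.{1} 1 := optArrow_bound (ch_transfer CH0) hQbound
  -- pigeonholes
  obtain ⟨vD, hK2big⟩ := big_fiber K1 DM (set_bound CH0 (le_of_eq mk_nat)) hK1big
  set K2 : Set Ordinal.{0} := {ξ | ξ ∈ K1 ∧ DM ξ = vD} with hK2def
  obtain ⟨vL, hK3big⟩ := big_fiber K2 LM
    (set_bound CH0 (mk_le_aleph0_iff.mpr inferInstance)) hK2big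
  set K3 : Set Ordinal.{0} := {ξ | ξ ∈ K2 ∧ LM ξ = vL} with hK3def
  obtain ⟨vB, hK4big⟩ := big_fiber K3 BE
    (optArrow_bound (ch_transfer CH0) (prod_bound' hnatle hQCb)) hK3big
  set K4 : Set Ordinal.{0} := {ξ | ξ ∈ K3 ∧ BE ξ = vB} with hK4def
  obtain ⟨vC, hK5big⟩ := big_fiber K4 CE (optArrow_bound CH0 harrownn) hK4big
  set K5 : Set Ordinal.{0} := {ξ | ξ ∈ K4 ∧ CE ξ = vC} with hK5def
  obtain ⟨vF, hK6big⟩ := big_fiber K5 FE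
    (optArrow_bound (ch_transfer CH0)
      (prod_bound' harrownn (prod_bound' (prod_bound' hnatle hQCb) hnatle))) hK5big
  set K6 : Set Ordinal.{0} := {ξ | ξ ∈ K5 ∧ FE ξ = vF} with hK6def
  obtain ⟨ξa, hξa, ξb, hξb, hab⟩ := two_of_big K6 hK6big
  have key : ∀ ξ ξ', ξ ∈ K6 → ξ' ∈ K6 → ξ < ξ' →
      ∃ r ∈ W, ∃ s ∈ W, r ≠ s ∧ ∃ E : Set Ordinal.{0},
      r.A ∩ s.A = E ∧
      (∀ x ∈ r.A, x ∉ E → ∀ c ∈ E, c < x) ∧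
      (∀ x ∈ s.A, x ∉ E → ∀ c ∈ E, c < x) ∧
      ∃ φ ψ : Ordinal.{0} → Ordinal.{0},
        (∀ x ∈ r.A, φ x ∈ s.A) ∧ (∀ y ∈ s.A, ψ y ∈ r.A) ∧
        (∀ x ∈ r.A, ψ (φ x) = x) ∧ (∀ y ∈ s.A, φ (ψ y) = y) ∧
        (∀ c ∈ E, φ c = c) ∧
        (∀ x ∈ r.A, ∀ y ∈ r.A, (r.lt x y ↔ s.lt (φ x) (φ y))) ∧
        s.B = (fun pq : Ordinal × ColFun => (φ pq.1, mapCol φ pq.2)) '' r.B ∧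
        s.C = (fun a : ℕ → Ordinal => φ ∘ a) '' r.C ∧
        s.F = (fun x : (ℕ → Ordinal) × (Ordinal × ColFun) × ℕ =>
          (φ ∘ x.1, (φ x.2.1.1, mapCol φ x.2.1.2), x.2.2)) '' r.F := by
    intro ξ ξ' hK6a hK6b hltab
    have hK1a : ξ ∈ K1 := hK6a.1.1.1.1.1
    have hK1b : ξ' ∈ K1 := hK6b.1.1.1.1.1
    have hκa : ξ < (aleph 2).ord := hK1a.1.1.1
    have hκb : ξ' < (aleph 2).ord := hK1b.1.1.1
    have hEa : {x | x ∈ (w ξ).A ∧ x < ξ} = E := htraceE ξ hK1a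
    have hEb : {x | x ∈ (w ξ').A ∧ x < ξ'} = E := htraceE ξ' hK1b
    have hDeq : DM ξ = DM ξ' := hK6a.1.1.1.1.2.trans hK6b.1.1.1.1.2.symm
    have hLeq : LM ξ = LM ξ' := hK6a.1.1.1.2.trans hK6b.1.1.1.2.symm
    have hBeq : BE ξ = BE ξ' := hK6a.1.1.2.trans hK6b.1.1.2.symm
    have hCeq : CE ξ = CE ξ' := hK6a.1.2.trans hK6b.1.2.symm
    have hFeq : FE ξ = FE ξ' := hK6a.2.trans hK6b.2.symm
    have hBMeq : BM ξ = BM ξ' := by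
      rw [hBE ξ (hBMc ξ hκa), hBE ξ' (hBMc ξ' hκb), hBeq]
    have hCMeq : CM ξ = CM ξ' := by
      rw [hCE ξ (hCMc ξ hκa), hCE ξ' (hCMc ξ' hκb), hCeq]
    have hFMeq : FM ξ = FM ξ' := by
      rw [hFE ξ (hFMc ξ hκa), hFE ξ' (hFMc ξ' hκb), hFeq]
    have hDMeq : (fC ξ) '' (w ξ).A = (fC ξ') '' (w ξ').A := hDeq
    obtain ⟨hr1, hr2, hr3, hr4, hr5, hr6, hr7, hr8, hr9, hr10, hr11, hr12⟩ := hwcond ξ hκa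
    obtain ⟨hs1, hs2, hs3, hs4, hs5, hs6, hs7, hs8, hs9, hs10, hs11, hs12⟩ := hwcond ξ' hκb
    have hEsubA : E ⊆ (w ξ).A := by rw [← hEa]; exact fun x hx => hx.1
    have hEsubA' : E ⊆ (w ξ').A := by rw [← hEb]; exact fun x hx => hx.1
    have hAsub : ∀ x ∈ (w ξ).A, x < ξ' := by
      intro x hx
      exact (hbnd2 ξ hκa x hx).trans (hK1b.1.1.2 ξ hltab)
    have hEint : (w ξ).A ∩ (w ξ').A = E := by
      ext x
      constructor
      · rintro ⟨h1, h2⟩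
        rw [← hEb]
        exact ⟨h2, hAsub x h1⟩
      · intro hx
        exact ⟨hEsubA hx, hEsubA' hx⟩
    have hsepr : ∀ x ∈ (w ξ).A, x ∉ E → ∀ c ∈ E, c < x := by
      intro x hx hxE c hc
      have hcξ : c < ξ := by rw [← hEa] at hc; exact hc.2
      have hxξ : ξ ≤ x := by
        by_contra h
        push_neg at h
        exact hxE (by rw [← hEa]; exact ⟨hx, h⟩)
      exact hcξ.trans_le hxξ
    have hseps : ∀ x ∈ (w ξ').A, x ∉ E → ∀ c ∈ E, c < x := by
      intro x hx hxE c hc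
      have hcξ : c < ξ' := by rw [← hEb] at hc; exact hc.2
      have hxξ : ξ' ≤ x := by
        by_contra h
        push_neg at h
        exact hxE (by rw [← hEb]; exact ⟨hx, h⟩)
      exact hcξ.trans_le hxξ
    have hinj1 : InjOn (fC ξ) (w ξ).A := hfC1 ξ hκa
    have hinj2 : InjOn (fC ξ') (w ξ').A := hfC1 ξ' hκb
    -- the isomorphism
    have hφex : ∀ x ∈ (w ξ).A, ∃ y, y ∈ (w ξ').A ∧ fC ξ' y = fC ξ x := by
      intro x hx
      have h1 : fC ξ x ∈ (fC ξ') '' (w ξ').A := by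
        rw [← hDMeq]; exact mem_image_of_mem _ hx
      obtain ⟨y, hy1, hy2⟩ := h1
      exact ⟨y, hy1, hy2⟩
    have hψex : ∀ y ∈ (w ξ').A, ∃ x, x ∈ (w ξ).A ∧ fC ξ x = fC ξ' y := by
      intro y hy
      have h1 : fC ξ' y ∈ (fC ξ) '' (w ξ).A := by
        rw [hDMeq]; exact mem_image_of_mem _ hy
      obtain ⟨x, hx1, hx2⟩ := h1
      exact ⟨x, hx1, hx2⟩
    set φ : Ordinal.{0} → Ordinal.{0} := fun x =>
      if h : ∃ y, y ∈ (w ξ').A ∧ fC ξ' y = fC ξ x then h.choose else x with hφdef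
    set ψ : Ordinal.{0} → Ordinal.{0} := fun y =>
      if h : ∃ x, x ∈ (w ξ).A ∧ fC ξ x = fC ξ' y then h.choose else y with hψdef
    have hφP : ∀ x ∈ (w ξ).A, φ x ∈ (w ξ').A ∧ fC ξ' (φ x) = fC ξ x := by
      intro x hx
      rw [hφdef]
      dsimp only
      rw [dif_pos (hφex x hx)]
      exact (hφex x hx).choose_spec
    have hψP : ∀ y ∈ (w ξ').A, ψ y ∈ (w ξ).A ∧ fC ξ (ψ y) = fC ξ' y := by
      intro y hy
      rw [hψdef]
      dsimp only
      rw [dif_pos (hψex y hy)]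
      exact (hψex y hy).choose_spec
    have hψφ : ∀ x ∈ (w ξ).A, ψ (φ x) = x := by
      intro x hx
      have h1 := hφP x hx
      have h2 := hψP (φ x) h1.1
      apply hinj1 h2.1 hx
      rw [h2.2, h1.2]
    have hφψ : ∀ y ∈ (w ξ').A, φ (ψ y) = y := by
      intro y hy
      have h1 := hψP y hy
      have h2 := hφP (ψ y) h1.1
      apply hinj2 h2.1 hy
      rw [h2.2, h1.2]
    have hfix : ∀ c ∈ E, φ c = c := by
      intro c hc
      have h1 := hφP c (hEsubA hc)
      apply hinj2 h1.1 (hEsubA' hc)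
      rw [h1.2, hfC2 ξ hκa c hc, hfC2 ξ' hκb c hc]
    have hltiff : ∀ x ∈ (w ξ).A, ∀ y ∈ (w ξ).A,
        ((w ξ).lt x y ↔ (w ξ').lt (φ x) (φ y)) := by
      intro x hx y hy
      constructor
      · intro h
        have h1 : ((fC ξ x, fC ξ y) : ℕ × ℕ) ∈ LM ξ := ⟨x, hx, y, hy, h, rfl, rfl⟩
        rw [hLeq] at h1
        obtain ⟨x', hx', y', hy', hlt2, he1, he2⟩ := h1
        have hex : x' = φ x := hinj2 hx' (hφP x hx).1 (by rw [he1, (hφP x hx).2])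
        have hey : y' = φ y := hinj2 hy' (hφP y hy).1 (by rw [he2, (hφP y hy).2])
        rw [← hex, ← hey]
        exact hlt2
      · intro h
        have h1 : ((fC ξ' (φ x), fC ξ' (φ y)) : ℕ × ℕ) ∈ LM ξ' :=
          ⟨φ x, (hφP x hx).1, φ y, (hφP y hy).1, h, rfl, rfl⟩
        rw [← hLeq] at h1
        obtain ⟨x₀, hx₀, y₀, hy₀, hlt2, he1, he2⟩ := h1
        have hex : x₀ = x := hinj1 hx₀ hx (by rw [he1, (hφP x hx).2])
        have hey : y₀ = y := hinj1 hy₀ hy (by rw [he2, (hφP y hy).2])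
        rw [← hex, ← hey]
        exact hlt2
    -- transfer of collapse functions
    have hqdec : ∀ (q q₀ : Set (Ordinal.{0} × Ordinal.{0})),
        ((fun ab : Ordinal.{0} × Ordinal.{0} => (ab.1, fC ξ ab.2)) '' q₀).Countable →
        ((fun ab : Ordinal.{0} × Ordinal.{0} => (ab.1, fC ξ ab.2)) '' q₀) ⊆ Qamb →
        ((fun ab : Ordinal.{0} × Ordinal.{0} => (ab.1, fC ξ' ab.2)) '' q).Countable →
        ((fun ab : Ordinal.{0} × Ordinal.{0} => (ab.1, fC ξ' ab.2)) '' q) ⊆ Qamb →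
        qE (fC ξ) q₀ = qE (fC ξ') q →
        ((fun ab : Ordinal.{0} × Ordinal.{0} => (ab.1, fC ξ ab.2)) '' q₀) =
          ((fun ab : Ordinal.{0} × Ordinal.{0} => (ab.1, fC ξ' ab.2)) '' q) := by
      intro q q₀ h1 h2 h3 h4 he
      rw [hqEspec _ _ h1 h2, hqEspec _ _ h3 h4, he]
    have hqmap : ∀ (q q₀ : Set (Ordinal.{0} × Ordinal.{0})),
        (∀ α b, (α, b) ∈ q → b ∈ (w ξ').A) → (∀ α b, (α, b) ∈ q₀ → b ∈ (w ξ).A) →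
        ((fun ab : Ordinal.{0} × Ordinal.{0} => (ab.1, fC ξ ab.2)) '' q₀) =
          ((fun ab : Ordinal.{0} × Ordinal.{0} => (ab.1, fC ξ' ab.2)) '' q) →
        q = mapCol φ q₀ := by
      intro q q₀ hqv hq₀v hdec
      ext ⟨α, b⟩
      constructor
      · intro hb
        have hbA : b ∈ (w ξ').A := hqv α b hb
        have h2 : ((α, fC ξ' b) : Ordinal.{0} × ℕ) ∈
            (fun ab : Ordinal.{0} × Ordinal.{0} => (ab.1, fC ξ ab.2)) '' q₀ := by
          rw [hdec]; exact ⟨(α, b), hb, rfl⟩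
        obtain ⟨⟨α', b₀⟩, hb₀, heq2⟩ := h2
        simp only [Prod.mk.injEq] at heq2
        have hb₀A : b₀ ∈ (w ξ).A := hq₀v α' b₀ hb₀
        have hφb : φ b₀ = b :=
          hinj2 (hφP b₀ hb₀A).1 hbA (by rw [(hφP b₀ hb₀A).2, heq2.2])
        refine ⟨(α', b₀), hb₀, ?_⟩
        rw [show α' = α from heq2.1] at hb₀ ⊢
        dsimp only
        rw [hφb]
      · rintro ⟨⟨α', b₀⟩, hb₀, heq2⟩
        simp only [Prod.mk.injEq] at heq2
        have hb₀A : b₀ ∈ (w ξ).A := hq₀v α' b₀ hb₀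
        have h2 : ((α', fC ξ b₀) : Ordinal.{0} × ℕ) ∈
            (fun ab : Ordinal.{0} × Ordinal.{0} => (ab.1, fC ξ' ab.2)) '' q := by
          rw [← hdec]; exact ⟨(α', b₀), hb₀, rfl⟩
        obtain ⟨⟨α'', b'⟩, hb', heq3⟩ := h2
        simp only [Prod.mk.injEq] at heq3
        have hb'A : b' ∈ (w ξ').A := hqv α'' b' hb'
        have hbb : b' = φ b₀ :=
          hinj2 hb'A (hφP b₀ hb₀A).1 (by rw [heq3.2, (hφP b₀ hb₀A).2])
        rw [← heq2.1, ← heq2.2, ← hbb, ← heq3.1]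
        exact hb'
    have hBimg : (w ξ').B = (fun pq : Ordinal × ColFun => (φ pq.1, mapCol φ pq.2)) '' (w ξ).B := by
      ext ⟨p, q⟩
      constructor
      · intro hpq
        have h1 : ((fC ξ' p, qE (fC ξ') q) : ℕ × (ℕ → Option ↥Qamb)) ∈ BM ξ' :=
          ⟨(p, q), hpq, rfl⟩
        rw [← hBMeq] at h1
        obtain ⟨⟨p₀, q₀⟩, h0, heq⟩ := h1
        simp only [Prod.mk.injEq] at heq
        have hp₀A : p₀ ∈ (w ξ).A := (hr7 _ h0).1
        have hpA : p ∈ (w ξ').A := (hs7 _ hpq).1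
        have hφp : φ p₀ = p :=
          hinj2 (hφP p₀ hp₀A).1 hpA (by rw [(hφP p₀ hp₀A).2, heq.1])
        have hc₀ := hqcond ξ hκa (p₀, q₀) h0
        have hc := hqcond ξ' hκb (p, q) hpq
        have hq : q = mapCol φ q₀ :=
          hqmap q q₀ (fun α b hb => ((hs7 _ hpq).2.1).2.2 α b hb)
            (fun α b hb => ((hr7 _ h0).2.1).2.2 α b hb)
            (hqdec q q₀ hc₀.1 hc₀.2 hc.1 hc.2 heq.2)
        refine ⟨(p₀, q₀), h0, ?_⟩
        dsimp only
        rw [hφp, ← hq]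
      · rintro ⟨⟨p₀, q₀⟩, h0, heq⟩
        have h1 : ((fC ξ p₀, qE (fC ξ) q₀) : ℕ × (ℕ → Option ↥Qamb)) ∈ BM ξ :=
          ⟨(p₀, q₀), h0, rfl⟩
        rw [hBMeq] at h1
        obtain ⟨⟨p', q'⟩, h', heq'⟩ := h1
        simp only [Prod.mk.injEq] at heq'
        have hp₀A : p₀ ∈ (w ξ).A := (hr7 _ h0).1
        have hp'A : p' ∈ (w ξ').A := (hs7 _ h').1
        have hφp : φ p₀ = p' :=
          hinj2 (hφP p₀ hp₀A).1 hp'A (by rw [(hφP p₀ hp₀A).2, heq'.1])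
        have hc₀ := hqcond ξ hκa (p₀, q₀) h0
        have hc' := hqcond ξ' hκb (p', q') h'
        have hq : q' = mapCol φ q₀ :=
          hqmap q' q₀ (fun α b hb => ((hs7 _ h').2.1).2.2 α b hb)
            (fun α b hb => ((hr7 _ h0).2.1).2.2 α b hb)
            (hqdec q' q₀ hc₀.1 hc₀.2 hc'.1 hc'.2 heq'.2.symm)
        rw [← heq]
        dsimp only
        rw [hφp, ← hq]
        exact h'
    have hamap : ∀ (a a₀ : ℕ → Ordinal.{0}), (∀ n, a n ∈ (w ξ').A) →
        (∀ n, a₀ n ∈ (w ξ).A) → (fC ξ) ∘ a₀ = (fC ξ') ∘ a → φ ∘ a₀ = a := by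
      intro a a₀ h h₀ he
      funext n
      have h1 : fC ξ (a₀ n) = fC ξ' (a n) := congrFun he n
      exact hinj2 (hφP (a₀ n) (h₀ n)).1 (h n) (by rw [(hφP _ (h₀ n)).2, h1])
    have hCimg : (w ξ').C = (fun a : ℕ → Ordinal => φ ∘ a) '' (w ξ).C := by
      ext a
      constructor
      · intro ha
        have h1 : (fC ξ') ∘ a ∈ CM ξ' := ⟨a, ha, rfl⟩
        rw [← hCMeq] at h1
        obtain ⟨a₀, h0, heq⟩ := h1
        exact ⟨a₀, h0, hamap a a₀ (fun n => (hs9 a ha).1 n) (fun n => (hr9 a₀ h0).1 n) heq⟩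
      · rintro ⟨a₀, h0, rfl⟩
        have h1 : (fC ξ) ∘ a₀ ∈ CM ξ := ⟨a₀, h0, rfl⟩
        rw [hCMeq] at h1
        obtain ⟨a', h', heq⟩ := h1
        have := hamap a' a₀ (fun n => (hs9 a' h').1 n) (fun n => (hr9 a₀ h0).1 n) heq.symm
        dsimp only
        rw [this]
        exact h'
    have hFimg : (w ξ').F = (fun x : (ℕ → Ordinal) × (Ordinal × ColFun) × ℕ =>
        (φ ∘ x.1, (φ x.2.1.1, mapCol φ x.2.1.2), x.2.2)) '' (w ξ).F := by
      ext ⟨a, ⟨p, q⟩, m⟩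
      constructor
      · intro hx
        have h1 : (((fC ξ') ∘ a, (fC ξ' p, qE (fC ξ') q), m) :
            (ℕ → ℕ) × (ℕ × (ℕ → Option ↥Qamb)) × ℕ) ∈ FM ξ' := ⟨(a, (p, q), m), hx, rfl⟩
        rw [← hFMeq] at h1
        obtain ⟨⟨a₀, ⟨p₀, q₀⟩, m₀⟩, h0, heq⟩ := h1
        simp only [Prod.mk.injEq] at heq
        have haC : a ∈ (w ξ').C := (hs10 _ hx).1
        have hpqB : (p, q) ∈ (w ξ').B := (hs10 _ hx).2.1
        have ha₀C : a₀ ∈ (w ξ).C := (hr10 _ h0).1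
        have hp₀qB : (p₀, q₀) ∈ (w ξ).B := (hr10 _ h0).2.1
        have ha : φ ∘ a₀ = a :=
          hamap a a₀ (fun n => (hs9 a haC).1 n) (fun n => (hr9 a₀ ha₀C).1 n) heq.1
        have hφp : φ p₀ = p :=
          hinj2 (hφP p₀ (hr7 _ hp₀qB).1).1 (hs7 _ hpqB).1
            (by rw [(hφP p₀ (hr7 _ hp₀qB).1).2, heq.2.1.1])
        have hc₀ := hqcond ξ hκa (p₀, q₀) hp₀qB
        have hc := hqcond ξ' hκb (p, q) hpqB
        have hq : q = mapCol φ q₀ :=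
          hqmap q q₀ (fun α b hb => ((hs7 _ hpqB).2.1).2.2 α b hb)
            (fun α b hb => ((hr7 _ hp₀qB).2.1).2.2 α b hb)
            (hqdec q q₀ hc₀.1 hc₀.2 hc.1 hc.2 heq.2.1.2)
        refine ⟨(a₀, (p₀, q₀), m₀), h0, ?_⟩
        dsimp only
        rw [ha, hφp, ← hq, heq.2.2]
      · rintro ⟨⟨a₀, ⟨p₀, q₀⟩, m₀⟩, h0, heq⟩
        have h1 : (((fC ξ) ∘ a₀, (fC ξ p₀, qE (fC ξ) q₀), m₀) :
            (ℕ → ℕ) × (ℕ × (ℕ → Option ↥Qamb)) × ℕ) ∈ FM ξ := ⟨(a₀, (p₀, q₀), m₀), h0, rfl⟩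
        rw [hFMeq] at h1
        obtain ⟨⟨a', ⟨p', q'⟩, m'⟩, h', heq'⟩ := h1
        simp only [Prod.mk.injEq] at heq'
        have ha'C : a' ∈ (w ξ').C := (hs10 _ h').1
        have hp'qB : (p', q') ∈ (w ξ').B := (hs10 _ h').2.1
        have ha₀C : a₀ ∈ (w ξ).C := (hr10 _ h0).1
        have hp₀qB : (p₀, q₀) ∈ (w ξ).B := (hr10 _ h0).2.1
        have ha : φ ∘ a₀ = a' :=
          hamap a' a₀ (fun n => (hs9 a' ha'C).1 n) (fun n => (hr9 a₀ ha₀C).1 n) heq'.1.symm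
        have hφp : φ p₀ = p' :=
          hinj2 (hφP p₀ (hr7 _ hp₀qB).1).1 (hs7 _ hp'qB).1
            (by rw [(hφP p₀ (hr7 _ hp₀qB).1).2, heq'.2.1.1])
        have hc₀ := hqcond ξ hκa (p₀, q₀) hp₀qB
        have hc' := hqcond ξ' hκb (p', q') hp'qB
        have hq : q' = mapCol φ q₀ :=
          hqmap q' q₀ (fun α b hb => ((hs7 _ hp'qB).2.1).2.2 α b hb)
            (fun α b hb => ((hr7 _ hp₀qB).2.1).2.2 α b hb)
            (hqdec q' q₀ hc₀.1 hc₀.2 hc'.1 hc'.2 heq'.2.1.2.symm)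
        rw [← heq]
        dsimp only
        rw [ha, hφp, ← hq, ← heq'.2.2]
        exact h'
    have hne : w ξ ≠ w ξ' := by
      intro h
      exact absurd (hwinj ξ hκa ξ' hκb h) (ne_of_lt hltab)
    exact ⟨w ξ, hwW ξ hκa, w ξ', hwW ξ' hκb, hne, E, hEint, hsepr, hseps, φ, ψ,
      (fun x hx => (hφP x hx).1), (fun y hy => (hψP y hy).1), hψφ, hφψ, hfix, hltiff,
      hBimg, hCimg, hFimg⟩
  rcases lt_or_gt_of_ne hab with h | h
  · exact key ξa ξb hξa hξb h
  · exact key ξb ξa hξb hξa h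

end CCAux

open Quad in
/-- Assuming CH, `R` satisfies the ℵ₂-chain condition. -/
theorem stmt1 (CH : (2 : Cardinal) ^ Cardinal.aleph0 = Cardinal.aleph 1)
    (W : Set Quad) (hW : ∀ w ∈ W, w.IsCond) (hcard : Cardinal.mk W = Cardinal.aleph 2) :
    ∃ r ∈ W, ∃ s ∈ W, r ≠ s ∧ ∃ t : Quad, t.IsCond ∧ Ext t r ∧ Ext t s := by
  have CH0 : (2 : Cardinal.{0}) ^ Cardinal.aleph0 = Cardinal.aleph 1 := CCAux.ch_transfer CH
  obtain ⟨r, hrW, s, hsW, hne, E, hE, hsepr, hseps, φ, ψ, hφA, hψA, hψφ, hφψ, hfix, hlt,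
    hB, hC, hF⟩ := CCAux.exists_good_pair CH0 W hW hcard
  obtain ⟨t, ht, htr, hts⟩ := CCAux.amalg r s (hW r hrW) (hW s hsW) E hE hsepr hseps φ ψ
    hφA hψA hψφ hφψ hfix hlt hB hC hF
  exact ⟨r, hrW, s, hsW, hne, t, ht, htr, hts⟩
end
end

section
/- For every condition s ∈ R and every ordinal p < ω₂ there exists a condition r ∈ R with r ≤_R s and p ∈ Aᵣ; indeed r = ((Aₛ ∪ {p}, <ₛ), Bₛ, Cₛ, Fₛ) is such a condition. -/
open Cardinal Set

noncomputable section

namespace Quad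

/- Since `<ₛ` only relates elements of `Aₛ`, whatever lies `≤ₛ` below an element of `Aₛ` is itself
in `Aₛ`; so adding `p` changes neither incompatibility in `Aₛ` nor the absence of lower bounds for
the sequences in `Cₛ`. -/
def withPoint (s : Quad) (p : Ordinal) : Quad := ⟨insert p s.A, s.lt, s.B, s.C, s.F⟩

variable {s : Quad} {p x y : Ordinal}

theorem mem_of_leR (hdown : ∀ a b, s.lt a b → a ∈ s.A ∧ b ∈ s.A) (hy : y ∈ s.A)
    (h : s.leR x y) : x ∈ s.A := by
  rcases h with hlt | rfl
  exacts [(hdown x y hlt).1, hy]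

theorem incomp_withPoint_iff (hdown : ∀ a b, s.lt a b → a ∈ s.A ∧ b ∈ s.A) (hx : x ∈ s.A) :
    (s.withPoint p).Incomp x y ↔ s.Incomp x y := by
  refine not_congr ⟨?_, fun ⟨z, hz, hzxy⟩ => ⟨z, mem_insert_of_mem p hz, hzxy⟩⟩
  rintro ⟨z, -, hzx, hzy⟩
  exact ⟨z, mem_of_leR hdown hx hzx, hzx, hzy⟩

theorem isColFun_mono {X Y : Set Ordinal} {q : ColFun} (hXY : X ⊆ Y) (hq : IsColFun X q) :
    IsColFun Y q :=
  ⟨hq.1, hq.2.1, fun a b hab => hXY (hq.2.2 a b hab)⟩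

theorem IsCond.withPoint (hs : s.IsCond) (hp : p < (aleph 2).ord) : (s.withPoint p).IsCond := by
  obtain ⟨hAc, hAω₂, hdown, htrans, hord, hBc, hB, hCc, hC, hFdom, hFfun, hF⟩ := hs
  refine ⟨hAc.insert p, ?_, ?_, htrans, hord, hBc, ?_, hCc, ?_, hFdom, hFfun, ?_⟩
  · rintro a (rfl | ha)
    exacts [hp, hAω₂ a ha]
  · exact fun a b hab => (hdown a b hab).imp (mem_insert_of_mem p) (mem_insert_of_mem p)
  · exact fun pq hpq => (hB pq hpq).imp (mem_insert_of_mem p) (And.imp_left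
      (isColFun_mono (subset_insert p s.A)))
  · refine fun a ha => ⟨fun n => mem_insert_of_mem p ((hC a ha).1 n), (hC a ha).2.1, ?_⟩
    rintro ⟨z, -, hz⟩
    exact (hC a ha).2.2 ⟨z, mem_of_leR hdown ((hC a ha).1 0) (hz 0), hz⟩
  · intro a pq m hm p'q' hp'q' hle hsub hlt
    obtain ⟨k, hk⟩ := hF a pq m hm p'q' hp'q' hle hsub hlt
    exact ⟨k, (incomp_withPoint_iff hdown (hB p'q' hp'q').1).2 hk⟩

theorem ext_withPoint (hdown : ∀ a b, s.lt a b → a ∈ s.A ∧ b ∈ s.A) :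
    Ext (s.withPoint p) s :=
  ⟨subset_insert p s.A, fun _ _ _ _ => Iff.rfl, fun _ hx _ _ => incomp_withPoint_iff hdown hx,
    subset_rfl, subset_rfl, subset_rfl⟩

end Quad

open Quad in
/-- For every condition `s` and ordinal `p < ω₂` there is a stronger condition whose
first component contains `p`; indeed `((Aₛ ∪ {p}, <ₛ), Bₛ, Cₛ, Fₛ)` is such a condition. -/
theorem stmt2 (s : Quad) (hs : s.IsCond) (p : Ordinal) (hp : p < (aleph 2).ord) :
    (∃ r : Quad, r.IsCond ∧ Ext r s ∧ p ∈ r.A) ∧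
    (Quad.mk (insert p s.A) s.lt s.B s.C s.F).IsCond ∧
    Ext (Quad.mk (insert p s.A) s.lt s.B s.C s.F) s ∧
    p ∈ (Quad.mk (insert p s.A) s.lt s.B s.C s.F).A := by
  have hcond : (s.withPoint p).IsCond := hs.withPoint hp
  have hext : Ext (s.withPoint p) s := ext_withPoint hs.2.2.1
  exact ⟨⟨s.withPoint p, hcond, hext, mem_insert p s.A⟩, hcond, hext, mem_insert p s.A⟩
end
end

section
/- For every condition s ∈ R, every p₀ ∈ Aₛ, and every q₀ ∈ Col, there exist a condition r ∈ R with r ≤_R s, an element p ∈ Aᵣ, and a function q ∈ Col(Aᵣ) such that q ⊇ q₀, p <ᵣ p₀, and (p,q) ∈ Bᵣ. -/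
open Cardinal Set

noncomputable section

/-!
Pick `p < ω₂` above the countable set `Aₛ` (possible since `cf ω₂ > ω`) and adjoin it to `s`
directly below the elements `≥ₛ p₀`, together with the pair `(p, q₀ ∪ {(dom q₀, p)})`.
Compatibility between old points is unchanged, because a common lower bound `p` makes `p₀` one.
As `p ∉ Aₛ` lies in the range of the new `q`, the new pair extends no old pair; and a sequence
in `Cₛ`, having no lower bound, cannot stay `≥ₛ p₀`, so `p` is incompatible with one of its terms.
Hence `F` may take any value, say `0`, at the new pairs.
-/

namespace Ordinal

theorem exists_gt_of_countable {S : Set Ordinal} {a : Ordinal}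
    (ha : ℵ₀ < a.cof) (hS : S.Countable) (h : ∀ x ∈ S, x < a) : ∃ p < a, ∀ x ∈ S, x < p := by
  have := hS.to_subtype
  refine ⟨sSup ((· + 1) '' S), sSup_add_one_lt_of_lt_cof ?_ h, fun x hx => ?_⟩
  · rw [← lift_cof]
    exact (le_aleph0_iff_set_countable.mpr hS).trans_lt (aleph0_lt_lift.mpr ha)
  · exact (Order.lt_add_one_iff.mpr le_rfl).trans_le
      (le_csSup bddAbove_of_small (mem_image_of_mem _ hx))

theorem countable_Iio_of_lt_omega_one {δ : Ordinal} (hδ : δ < (aleph 1).ord) :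
    (Iio δ).Countable := by
  rw [← le_aleph0_iff_set_countable, Cardinal.mk_Iio_ordinal, lift_le_aleph0, ← lt_aleph_one_iff]
  exact lt_ord.mp hδ

end Ordinal

theorem Cardinal.aleph0_lt_cof_ord_aleph_two : ℵ₀ < (aleph 2).ord.cof := by
  rw [← one_add_one_eq_two, (isRegular_aleph_add_one 1).cof_ord]
  exact aleph0_lt_aleph_one.trans (aleph_lt_aleph.mpr (by norm_num))

namespace IsColFun

variable {X Y : Set Ordinal} {q : ColFun}

theorem mono_s3 (h : IsColFun X q) (hXY : X ⊆ Y) : IsColFun Y q :=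
  ⟨h.1, h.2.1, fun a b hab => hXY (h.2.2 a b hab)⟩

theorem image_snd_subset (h : IsColFun X q) : Prod.snd '' q ⊆ X := by
  rintro _ ⟨⟨a, b⟩, hab, rfl⟩
  exact h.2.2 a b hab

theorem of_image_snd (h : IsColFun X q) : IsColFun (Prod.snd '' q) q :=
  ⟨h.1, h.2.1, fun a b hab => ⟨(a, b), hab, rfl⟩⟩

theorem countable (h : IsColFun X q) : q.Countable := by
  obtain ⟨hfun, ⟨δ, hδ, hdom⟩, -⟩ := h
  refine MapsTo.countable_of_injOn (f := Prod.fst) (fun x hx => (hdom x.1).mp ⟨x.2, hx⟩) ?_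
    (Ordinal.countable_Iio_of_lt_omega_one hδ)
  rintro ⟨a, b⟩ hab ⟨a', b'⟩ hab' (rfl : a = a')
  rw [hfun a b b' hab hab']

theorem exists_insert (h : IsColFun X q) {x : Ordinal} (hx : x ∈ X) :
    ∃ δ, IsColFun X (insert (δ, x) q) := by
  obtain ⟨hfun, ⟨δ, hδ, hdom⟩, hrange⟩ := h
  have hδq : ∀ b, (δ, b) ∉ q := fun b hb => (hdom δ).mp ⟨b, hb⟩ |>.false
  refine ⟨δ, ?_, ⟨δ + 1, (isSuccLimit_ord (aleph0_le_aleph 1)).add_one_lt hδ, fun a => ?_⟩, ?_⟩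
  · rintro a b b' (⟨rfl, rfl⟩ | hb) (⟨-, rfl⟩ | hb')
    · rfl
    · exact absurd hb' (hδq b')
    · exact absurd hb (hδq b)
    · exact hfun a b b' hb hb'
  · simp only [mem_insert_iff, Prod.mk.injEq, exists_or, exists_and_left, exists_eq, and_true,
      Order.lt_add_one_iff, le_iff_lt_or_eq, hdom, or_comm]
  · rintro a b (⟨-, rfl⟩ | hb)
    exacts [hx, hrange a b hb]

end IsColFun

namespace Quad

def adjoinBelow (s : Quad) (p₀ p : Ordinal) (q : ColFun) : Quad where
  A := s.A ∪ Prod.snd '' q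
  lt a b := s.lt a b ∨ a = p ∧ b ∈ s.A ∧ s.leR p₀ b
  B := insert (p, q) s.B
  C := s.C
  F := s.F ∪ (fun a => (a, (p, q), 0)) '' s.C

section adjoinBelow

variable {s : Quad} {p₀ p z b : Ordinal} {q : ColFun}

theorem adjoinBelow_leR_iff (hb : b ∈ s.A) :
    (s.adjoinBelow p₀ p q).leR z b ↔ s.leR z b ∨ z = p ∧ s.leR p₀ b := by
  simp only [leR, adjoinBelow]
  tauto

theorem adjoinBelow_lt_iff_of_mem (hp : p ∉ s.A) (hz : z ∈ s.A) :
    (s.adjoinBelow p₀ p q).lt z b ↔ s.lt z b :=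
  or_iff_left fun h => hp (h.1 ▸ hz)

theorem adjoinBelow_leR_iff_of_mem (hp : p ∉ s.A) (hz : z ∈ s.A) :
    (s.adjoinBelow p₀ p q).leR z b ↔ s.leR z b :=
  or_congr_left (adjoinBelow_lt_iff_of_mem hp hz)

theorem eq_of_adjoinBelow_leR (hlt : ∀ a b, s.lt a b → a ∈ s.A ∧ b ∈ s.A) (hp : p ∉ s.A)
    (h : (s.adjoinBelow p₀ p q).leR z p) : z = p := by
  rcases h with (h | ⟨-, hpA, -⟩) | rfl
  exacts [absurd (hlt _ _ h).2 hp, absurd hpA hp, rfl]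

theorem exists_lowerBound_of_adjoinBelow (hlt : ∀ a b, s.lt a b → a ∈ s.A ∧ b ∈ s.A)
    (hp : p ∉ s.A) (hp₀ : p₀ ∈ s.A) {S : Set Ordinal} (hS : S ⊆ s.A)
    (hz : ∀ b ∈ S, (s.adjoinBelow p₀ p q).leR z b) : ∃ w ∈ s.A, ∀ b ∈ S, s.leR w b := by
  by_cases hzA : z ∈ s.A
  · exact ⟨z, hzA, fun b hb => (adjoinBelow_leR_iff_of_mem hp hzA).mp (hz b hb)⟩
  · refine ⟨p₀, hp₀, fun b hb => ?_⟩
    rcases (adjoinBelow_leR_iff (hS hb)).mp (hz b hb) with (h | rfl) | ⟨-, h⟩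
    exacts [absurd (hlt _ _ h).1 hzA, absurd (hS hb) hzA, h]

theorem adjoinBelow_incomp_iff (hlt : ∀ a b, s.lt a b → a ∈ s.A ∧ b ∈ s.A) (hp : p ∉ s.A)
    (hp₀ : p₀ ∈ s.A) {a : Ordinal} (ha : a ∈ s.A) (hb : b ∈ s.A) :
    (s.adjoinBelow p₀ p q).Incomp a b ↔ s.Incomp a b := by
  refine not_congr ⟨fun ⟨z, _, hza, hzb⟩ => ?_, fun ⟨z, hz, hza, hzb⟩ => ?_⟩
  · have hz : ∀ c ∈ ({a, b} : Set Ordinal), (s.adjoinBelow p₀ p q).leR z c := by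
      simpa only [mem_insert_iff, mem_singleton_iff, forall_eq_or_imp, forall_eq] using ⟨hza, hzb⟩
    obtain ⟨w, hw, hwle⟩ := exists_lowerBound_of_adjoinBelow hlt hp hp₀ (pair_subset ha hb) hz
    exact ⟨w, hw, hwle a (mem_insert _ _), hwle b (mem_insert_of_mem _ rfl)⟩
  · exact ⟨z, Or.inl hz, (adjoinBelow_leR_iff_of_mem hp hz).mpr hza,
      (adjoinBelow_leR_iff_of_mem hp hz).mpr hzb⟩

theorem adjoinBelow_not_exists_lowerBound (hlt : ∀ a b, s.lt a b → a ∈ s.A ∧ b ∈ s.A)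
    (hp : p ∉ s.A) (hp₀ : p₀ ∈ s.A) {a : ℕ → Ordinal} (ha : ∀ n, a n ∈ s.A)
    (hbot : ¬ ∃ z ∈ s.A, ∀ n, s.leR z (a n)) : ¬ ∃ z, ∀ n, (s.adjoinBelow p₀ p q).leR z (a n) := by
  rintro ⟨z, hz⟩
  obtain ⟨w, hw, hwle⟩ := exists_lowerBound_of_adjoinBelow hlt hp hp₀ (range_subset_iff.mpr ha)
    (forall_mem_range.mpr hz)
  exact hbot ⟨w, hw, fun n => hwle _ ⟨n, rfl⟩⟩

theorem exists_adjoinBelow_incomp (hlt : ∀ a b, s.lt a b → a ∈ s.A ∧ b ∈ s.A) (hp : p ∉ s.A)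
    (hp₀ : p₀ ∈ s.A) {a : ℕ → Ordinal} (ha : ∀ n, a n ∈ s.A)
    (hbot : ¬ ∃ z ∈ s.A, ∀ n, s.leR z (a n)) : ∃ k, (s.adjoinBelow p₀ p q).Incomp p (a k) := by
  by_contra! hcomp
  refine adjoinBelow_not_exists_lowerBound (q := q) hlt hp hp₀ ha hbot ⟨p, fun k => ?_⟩
  obtain ⟨z, -, hzp, hzk⟩ := not_not.mp (hcomp k)
  rwa [eq_of_adjoinBelow_leR hlt hp hzp] at hzk

theorem ext_adjoinBelow (hlt : ∀ a b, s.lt a b → a ∈ s.A ∧ b ∈ s.A) (hp : p ∉ s.A)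
    (hp₀ : p₀ ∈ s.A) : Ext (s.adjoinBelow p₀ p q) s :=
  ⟨subset_union_left, fun _ ha _ _ => adjoinBelow_lt_iff_of_mem hp ha,
    fun _ ha _ hb => adjoinBelow_incomp_iff hlt hp hp₀ ha hb, subset_insert _ _, subset_rfl,
    subset_union_left⟩

theorem IsCond.adjoinBelow_F_existsUnique (hs : s.IsCond) (hp : p ∉ s.A) :
    ∀ a pq, a ∈ (s.adjoinBelow p₀ p q).C → pq ∈ (s.adjoinBelow p₀ p q).B → a 0 ≤ pq.1 →
      ∃! m : ℕ, (a, pq, m) ∈ (s.adjoinBelow p₀ p q).F := by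
  obtain ⟨-, -, -, -, -, -, hB, -, -, hFdom, hFuniq, -⟩ := hs
  have hpqB : (p, q) ∉ s.B := fun h => hp (hB _ h).1
  rintro a pq ha (rfl | hpq) h0
  · refine ⟨0, Or.inr ⟨a, ha, rfl⟩, ?_⟩
    rintro m (hm | ⟨a', -, hm⟩)
    · exact absurd (hFdom _ hm).2.1 hpqB
    · exact (congrArg (·.2.2) hm).symm
  · obtain ⟨m, hm, hmu⟩ := hFuniq a pq ha hpq h0
    refine ⟨m, Or.inl hm, ?_⟩
    rintro m' (hm' | ⟨a', -, hm'⟩)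
    · exact hmu m' hm'
    · obtain rfl : (p, q) = pq := congrArg (·.2.1) hm'
      exact absurd hpq hpqB

theorem IsCond.adjoinBelow_F_spec (hs : s.IsCond) (hp₀ : p₀ ∈ s.A) (hp : p ∉ s.A) {δ : Ordinal}
    (hδ : (δ, p) ∈ q) :
    ∀ a pq m, (a, pq, m) ∈ (s.adjoinBelow p₀ p q).F →
      ∀ p'q' ∈ (s.adjoinBelow p₀ p q).B, (s.adjoinBelow p₀ p q).leR p'q'.1 pq.1 →
        pq.2 ⊆ p'q'.2 → (s.adjoinBelow p₀ p q).lt p'q'.1 (a m) →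
          ∃ k, (s.adjoinBelow p₀ p q).Incomp p'q'.1 (a k) := by
  obtain ⟨-, -, hlt, -, -, -, hB, -, hC, hFdom, -, hFstar⟩ := hs
  rintro a pq m hmem p'q' (rfl | hp'B) hle hsub hlt'
  · have ha : a ∈ s.C := by
      rcases hmem with hmem | ⟨a', ha', heq⟩
      · exact (hFdom _ hmem).1
      · obtain rfl : a' = a := congrArg (·.1) heq
        exact ha'
    exact exists_adjoinBelow_incomp hlt hp hp₀ (hC a ha).1 (hC a ha).2.2
  · rcases hmem with hmem | ⟨a', -, heq⟩
    · have h1 : p'q'.1 ∈ s.A := (hB _ hp'B).1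
      obtain ⟨k, hk⟩ := hFstar a pq m hmem p'q' hp'B ((adjoinBelow_leR_iff_of_mem hp h1).mp hle)
        hsub ((adjoinBelow_lt_iff_of_mem hp h1).mp hlt')
      exact ⟨k, (adjoinBelow_incomp_iff hlt hp hp₀ h1 ((hC a (hFdom _ hmem).1).1 k)).mpr hk⟩
    · obtain rfl : (p, q) = pq := congrArg (·.2.1) heq
      exact absurd (hsub hδ) fun h => hp ((hB _ hp'B).2.1.2.2 _ _ h)

theorem IsCond.adjoinBelow (hs : s.IsCond) (hp₀ : p₀ ∈ s.A) (hpA : ∀ b ∈ s.A, b < p)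
    {δ : Ordinal} (hq : IsColFun {α | α < (aleph 2).ord} q) (hδ : (δ, p) ∈ q) :
    (s.adjoinBelow p₀ p q).IsCond := by
  have hp : p ∉ s.A := fun h => (hpA p h).false
  have hFunique := hs.adjoinBelow_F_existsUnique (p₀ := p₀) (q := q) hp
  have hFspec := hs.adjoinBelow_F_spec hp₀ hp hδ
  obtain ⟨hAcnt, hAlt, hlt, hlttrans, hltord, hBcnt, hB, hCcnt, hC, hFdom, -, -⟩ := hs
  have hpR : p ∈ (s.adjoinBelow p₀ p q).A := Or.inr ⟨_, hδ, rfl⟩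
  have hFdomR : ∀ x ∈ (s.adjoinBelow p₀ p q).F,
      x.1 ∈ s.C ∧ x.2.1 ∈ (s.adjoinBelow p₀ p q).B ∧ x.1 0 ≤ x.2.1.1 := by
    rintro x (hx | ⟨a, ha, rfl⟩)
    · exact ⟨(hFdom x hx).1, Or.inr (hFdom x hx).2.1, (hFdom x hx).2.2⟩
    · exact ⟨ha, Or.inl rfl, (hpA _ ((hC a ha).1 0)).le⟩
  refine ⟨hAcnt.union (hq.countable.image _), ?_, ?_, ?_, ?_, hBcnt.insert _, ?_, hCcnt, ?_,
    hFdomR, hFunique, hFspec⟩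
  · rintro a (ha | ha)
    exacts [hAlt a ha, hq.image_snd_subset ha]
  · rintro a b (h | ⟨rfl, hb, -⟩)
    exacts [⟨Or.inl (hlt _ _ h).1, Or.inl (hlt _ _ h).2⟩, ⟨hpR, Or.inl hb⟩]
  · rintro a b c (hab | ⟨rfl, hb, hpb⟩) (hbc | ⟨rfl, -, -⟩)
    · exact Or.inl (hlttrans a b c hab hbc)
    · exact absurd (hlt _ _ hab).2 hp
    · refine Or.inr ⟨rfl, (hlt _ _ hbc).2, Or.inl ?_⟩
      rcases hpb with h | rfl
      exacts [hlttrans _ _ _ h hbc, hbc]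
    · exact absurd hb hp
  · rintro a b (h | ⟨rfl, hb, -⟩)
    exacts [hltord a b h, hpA _ hb]
  · rintro pq (rfl | hpq)
    · exact ⟨hpR, hq.of_image_snd.mono_s3 subset_union_right, _, hδ⟩
    · obtain ⟨h1, h2, h3⟩ := hB pq hpq
      exact ⟨Or.inl h1, h2.mono_s3 subset_union_left, h3⟩
  · intro a ha
    refine ⟨fun n => Or.inl ((hC a ha).1 n), fun n => Or.inl ((hC a ha).2.1 n), ?_⟩
    rintro ⟨z, -, hz⟩
    exact adjoinBelow_not_exists_lowerBound hlt hp hp₀ (hC a ha).1 (hC a ha).2.2 ⟨z, hz⟩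

end adjoinBelow

end Quad

open Quad in
/-- Density of `Q` in `P × Col`: below any `p₀ ∈ Aₛ` and `q₀ ∈ Col` one can find a
stronger condition `r` and a pair `(p,q) ∈ Bᵣ` with `q ⊇ q₀` and `p <ᵣ p₀`. -/
theorem stmt3 (s : Quad) (hs : s.IsCond) (p₀ : Ordinal) (hp₀ : p₀ ∈ s.A)
    (q₀ : ColFun) (hq₀ : IsColFun {α : Ordinal | α < (aleph 2).ord} q₀) :
    ∃ r : Quad, r.IsCond ∧ Ext r s ∧ ∃ p ∈ r.A, ∃ q : ColFun,
      IsColFun r.A q ∧ q₀ ⊆ q ∧ r.lt p p₀ ∧ (p, q) ∈ r.B := by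
  have ⟨hAcnt, hAlt, hlt, _⟩ := hs
  obtain ⟨p, hpω, hpA⟩ := Ordinal.exists_gt_of_countable aleph0_lt_cof_ord_aleph_two hAcnt hAlt
  have hp : p ∉ s.A := fun h => (hpA p h).false
  obtain ⟨δ, hq⟩ := hq₀.exists_insert hpω
  have hδ : (δ, p) ∈ insert (δ, p) q₀ := mem_insert _ _
  exact ⟨s.adjoinBelow p₀ p (insert (δ, p) q₀), hs.adjoinBelow hp₀ hpA hq hδ,
    ext_adjoinBelow hlt hp hp₀, p, Or.inr ⟨_, hδ, rfl⟩, _, hq.of_image_snd.mono_s3 subset_union_right,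
    subset_insert _ _, Or.inr ⟨rfl, hp₀, Or.inr rfl⟩, mem_insert _ _⟩
end
end

section
/- In the amalgamation setting: for all m and n, if x ∈ Aₙ, y ∈ Aₘ, and x <_t y, then x <ₙ π_{mn}(y) and π_{nm}(x) <ₘ y. In particular, for x, y ∈ Aₙ one has x <_t y if and only if x <ₙ y. -/
open Cardinal Set

noncomputable section

open Quad

/-- Push a `Col`-function forward along a map of ordinals (acting on the range). -/
def mapCol (f : Ordinal → Ordinal) (q : ColFun) : ColFun :=
  {x | ∃ a b, (a, b) ∈ q ∧ x = (a, f b)}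

/-- The amalgamation setting: a sequence of conditions forming a Δ-system with root `D`,
a commutative system of isomorphisms `π`, and descending chains `cⁿ` matched by `π`. -/
structure Amalg where
  r : ℕ → Quad
  cond : ∀ n, (r n).IsCond
  D : Set Ordinal
  inter : ∀ m n : ℕ, m < n → (r m).A ∩ (r n).A = D
  supD_lt : ∀ m : ℕ, ∀ x ∈ (r m).A \ D, sSup D < x
  supA_lt : ∀ m n : ℕ, m < n → ∀ x ∈ (r n).A \ D, sSup (r m).A < x
  lt_agree : ∀ m n : ℕ, ∀ a ∈ D, ∀ b ∈ D, ((r m).lt a b ↔ (r n).lt a b)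
  incomp_agree : ∀ m n : ℕ, ∀ a ∈ D, ∀ b ∈ D, ((r m).Incomp a b ↔ (r n).Incomp a b)
  B_agree : ∀ m n : ℕ, ∀ pq : Ordinal × ColFun, pq.1 ∈ D → IsColFun D pq.2 →
    (pq ∈ (r m).B ↔ pq ∈ (r n).B)
  C_agree : ∀ m n : ℕ, ∀ a : ℕ → Ordinal, (∀ k, a k ∈ D) → (a ∈ (r m).C ↔ a ∈ (r n).C)
  pi : ℕ → ℕ → Ordinal → Ordinal
  pi_mem : ∀ m n : ℕ, ∀ x ∈ (r m).A, pi m n x ∈ (r n).A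
  pi_id : ∀ m : ℕ, ∀ x ∈ (r m).A, pi m m x = x
  pi_inv : ∀ m n : ℕ, ∀ x ∈ (r m).A, pi n m (pi m n x) = x
  pi_comm : ∀ m n k : ℕ, ∀ x ∈ (r m).A, pi n k (pi m n x) = pi m k x
  pi_idD : ∀ m n : ℕ, ∀ x ∈ D, pi m n x = x
  pi_iso : ∀ m n : ℕ, ∀ x ∈ (r m).A, ∀ y ∈ (r m).A,
    ((r m).lt x y ↔ (r n).lt (pi m n x) (pi m n y))
  pi_B : ∀ m n : ℕ, ∀ pq ∈ (r m).B, (pi m n pq.1, mapCol (pi m n) pq.2) ∈ (r n).B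
  pi_C : ∀ m n : ℕ, ∀ a ∈ (r m).C, (fun k => pi m n (a k)) ∈ (r n).C
  pi_F : ∀ m n : ℕ, ∀ x ∈ (r m).F,
    ((fun k => pi m n (x.1 k)), (pi m n x.2.1.1, mapCol (pi m n) x.2.1.2), x.2.2) ∈ (r n).F
  c : ℕ → ℕ → Ordinal
  c_mem : ∀ n k : ℕ, c n k ∈ (r n).A \ D
  c_dec : ∀ n k : ℕ, (r n).lt (c n (k + 1)) (c n k)
  pi_c : ∀ m n k : ℕ, pi m n (c m k) = c n k

namespace Amalg

/-- `A_t = ⋃ₙ Aₙ`. -/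
def At (S : Amalg) : Set Ordinal := ⋃ n, (S.r n).A

/-- `<_t`: the transitive closure of the union of the `<ₙ` together with the pairs
`aⁿ⁺¹ₙ₊₁ <_t bⁿₙ` (recall `aⁿₖ = cⁿ₂ₖ` and `bⁿₖ = cⁿ₂ₖ₊₁`). -/
def ltT (S : Amalg) : Ordinal → Ordinal → Prop :=
  Relation.TransGen (fun x y =>
    (∃ n, (S.r n).lt x y) ∨ ∃ n : ℕ, x = S.c (n + 1) (2 * (n + 1)) ∧ y = S.c n (2 * n + 1))

/-- `x ≤_t y`. -/
def leT (S : Amalg) (x y : Ordinal) : Prop := S.ltT x y ∨ x = y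

/-- `x` and `y` are compatible in `<_t`. -/
def CompatT (S : Amalg) (x y : Ordinal) : Prop := ∃ z ∈ S.At, S.leT z x ∧ S.leT z y

end Amalg

/-!
The invariant `x <ₙ π_{mn} y` (for all `n`, `m` with `x ∈ Aₙ`, `y ∈ Aₘ`) holds for each
generating pair of `<_t` and is preserved along chains. For a pair `x <ₖ y` this is transport
along `π`, using that an element of two different `Aₖ` lies in `D`, where `π` is the identity;
chains compose by commutativity of `π` and transitivity of `<ₙ`. Applying `π_{nm}` gives the
other half, and for `m = n` the invariant is `x <ₙ y`.
-/

namespace Quad.IsCond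

variable {r : Quad}

theorem mem_of_lt_s7 (hr : r.IsCond) {x y : Ordinal} (h : r.lt x y) : x ∈ r.A ∧ y ∈ r.A :=
  hr.2.2.1 x y h

theorem lt_trans_s7 (hr : r.IsCond) {x y z : Ordinal} (hxy : r.lt x y) (hyz : r.lt y z) :
    r.lt x z :=
  hr.2.2.2.1 x y z hxy hyz

end Quad.IsCond

namespace Amalg

variable (S : Amalg)

def ltStep (x y : Ordinal) : Prop :=
  (∃ n, (S.r n).lt x y) ∨ ∃ n : ℕ, x = S.c (n + 1) (2 * (n + 1)) ∧ y = S.c n (2 * n + 1)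

theorem ltT_eq_transGen_ltStep : S.ltT = Relation.TransGen S.ltStep := rfl

variable {S}

theorem mem_D_of_mem_of_mem {k m : ℕ} (hkm : k ≠ m) {y : Ordinal} (hk : y ∈ (S.r k).A)
    (hm : y ∈ (S.r m).A) : y ∈ S.D := by
  rcases hkm.lt_or_gt with h | h
  · exact S.inter k m h ▸ ⟨hk, hm⟩
  · exact S.inter m k h ▸ ⟨hm, hk⟩

theorem pi_eq_pi_of_mem_of_mem {k m : ℕ} (n : ℕ) {y : Ordinal} (hk : y ∈ (S.r k).A)
    (hm : y ∈ (S.r m).A) : S.pi k n y = S.pi m n y := by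
  by_cases h : k = m
  · rw [h]
  · have hD := mem_D_of_mem_of_mem h hk hm
    rw [S.pi_idD k n y hD, S.pi_idD m n y hD]

theorem pi_eq_self_of_mem_of_mem {k n : ℕ} {x : Ordinal} (hk : x ∈ (S.r k).A)
    (hn : x ∈ (S.r n).A) : S.pi k n x = x := by
  rw [pi_eq_pi_of_mem_of_mem n hk hn, S.pi_id n x hn]

theorem eq_of_c_mem {n k m : ℕ} (h : S.c k m ∈ (S.r n).A) : n = k := by
  by_contra hnk
  exact (S.c_mem k m).2 (mem_D_of_mem_of_mem hnk h (S.c_mem k m).1)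

theorem exists_mem_of_ltStep {x y : Ordinal} (h : S.ltStep x y) : ∃ k, x ∈ (S.r k).A := by
  rcases h with ⟨k, hk⟩ | ⟨j, rfl, -⟩
  · exact ⟨k, ((S.cond k).mem_of_lt_s7 hk).1⟩
  · exact ⟨j + 1, (S.c_mem _ _).1⟩

theorem lt_pi_of_lt {k n m : ℕ} {x y : Ordinal} (h : (S.r k).lt x y) (hx : x ∈ (S.r n).A)
    (hy : y ∈ (S.r m).A) : (S.r n).lt x (S.pi m n y) := by
  obtain ⟨hxk, hyk⟩ := (S.cond k).mem_of_lt_s7 h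
  have hlt := (S.pi_iso k n x hxk y hyk).mp h
  rwa [pi_eq_self_of_mem_of_mem hxk hx, pi_eq_pi_of_mem_of_mem n hyk hy] at hlt

/-- Pulled into `Aⱼ₊₁`, the new pair `aʲ⁺¹ⱼ₊₁ <_t bʲⱼ` becomes `cʲ⁺¹₂ⱼ₊₂ <ⱼ₊₁ cʲ⁺¹₂ⱼ₊₁`,
an instance of the descent of `cʲ⁺¹`. -/
theorem c_lt_pi_c {j n m : ℕ} (hx : S.c (j + 1) (2 * (j + 1)) ∈ (S.r n).A)
    (hy : S.c j (2 * j + 1) ∈ (S.r m).A) :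
    (S.r n).lt (S.c (j + 1) (2 * (j + 1))) (S.pi m n (S.c j (2 * j + 1))) := by
  obtain rfl := eq_of_c_mem hx
  obtain rfl := eq_of_c_mem hy
  rw [S.pi_c, show 2 * (m + 1) = 2 * m + 1 + 1 by ring]
  exact S.c_dec _ _

theorem lt_pi_of_ltStep {n m : ℕ} {x y : Ordinal} (h : S.ltStep x y) (hx : x ∈ (S.r n).A)
    (hy : y ∈ (S.r m).A) : (S.r n).lt x (S.pi m n y) := by
  rcases h with ⟨k, hk⟩ | ⟨j, rfl, rfl⟩
  · exact lt_pi_of_lt hk hx hy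
  · exact c_lt_pi_c hx hy

theorem lt_pi_trans {n k m : ℕ} {x y z : Ordinal} (hy : y ∈ (S.r k).A) (hz : z ∈ (S.r m).A)
    (hxy : (S.r n).lt x (S.pi k n y)) (hyz : (S.r k).lt y (S.pi m k z)) :
    (S.r n).lt x (S.pi m n z) := by
  have h := (S.pi_iso k n y hy _ (S.pi_mem m k z hz)).mp hyz
  rw [S.pi_comm m k n z hz] at h
  exact (S.cond n).lt_trans_s7 hxy h

theorem lt_pi_of_ltT {n m : ℕ} {x y : Ordinal} (h : S.ltT x y) (hx : x ∈ (S.r n).A)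
    (hy : y ∈ (S.r m).A) : (S.r n).lt x (S.pi m n y) := by
  rw [ltT_eq_transGen_ltStep] at h
  induction h generalizing m with
  | single hxy => exact lt_pi_of_ltStep hxy hx hy
  | tail _ hbc ih =>
    obtain ⟨k, hb⟩ := exists_mem_of_ltStep hbc
    exact lt_pi_trans hb hy (ih hb) (lt_pi_of_ltStep hbc hb hy)

theorem pi_lt_of_lt_pi {n m : ℕ} {x y : Ordinal} (hx : x ∈ (S.r n).A) (hy : y ∈ (S.r m).A)
    (h : (S.r n).lt x (S.pi m n y)) : (S.r m).lt (S.pi n m x) y := by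
  have h' := (S.pi_iso n m x hx _ (S.pi_mem m n y hy)).mp h
  rwa [S.pi_inv m n y hy] at h'

theorem ltT_of_lt {n : ℕ} {x y : Ordinal} (h : (S.r n).lt x y) : S.ltT x y :=
  Relation.TransGen.single (Or.inl ⟨n, h⟩)

end Amalg

/-- Lemma 7(ii): if `x ∈ Aₙ`, `y ∈ Aₘ` and `x <_t y` then `x <ₙ π_{mn} y` and
`π_{nm} x <ₘ y`; in particular for `x, y ∈ Aₙ`, `x <_t y ↔ x <ₙ y`. -/
theorem stmt7 (S : Amalg) :
    (∀ m n : ℕ, ∀ x ∈ (S.r n).A, ∀ y ∈ (S.r m).A,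
      S.ltT x y → (S.r n).lt x (S.pi m n y) ∧ (S.r m).lt (S.pi n m x) y) ∧
    (∀ n : ℕ, ∀ x ∈ (S.r n).A, ∀ y ∈ (S.r n).A, (S.ltT x y ↔ (S.r n).lt x y)) := by
  refine ⟨fun m n x hx y hy h => ?_, fun n x hx y hy => ⟨fun h => ?_, Amalg.ltT_of_lt⟩⟩
  · have hlt := Amalg.lt_pi_of_ltT h hx hy
    exact ⟨hlt, Amalg.pi_lt_of_lt_pi hx hy hlt⟩
  · simpa only [S.pi_id n y hy] using Amalg.lt_pi_of_ltT h hx hy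
end
end
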